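/- arXiv:1910.10189 — 7 statements merged into one kernel-verified Lean document; each statement's English description precedes it below -/
import Mathlib

section
/- Let 1 → N → G → Q → 1 be a short exact sequence of groups. Then the product rank of G is at most the product rank of N plus the product rank of Q, where the product rank of a group H is the supremum of integers k such that a direct product of k nonabelian free groups embeds into H. -/
set_option linter.unusedSectionVars false

namespace FreeGroupAux

universe u

section Words

variable {α : Type*} [DecidableEq α]


/-- tail of a reduced word is reduced -/
lemma reduced_cons {c : α × Bool} {w : List (α × Bool)}
    (h : FreeGroup.reduce (c :: w) = c :: w) : FreeGroup.reduce w = w := by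
  have h1 : FreeGroup.Red (FreeGroup.reduce (c :: w)) (c :: FreeGroup.reduce w) := by
    rw [h]; exact FreeGroup.Red.cons_cons FreeGroup.reduce.red
  have := FreeGroup.reduce.min h1
  rw [h] at this
  exact (List.cons.injEq _ _ _ _ ▸ this).2.symm

lemma reduced_no_cancel {c d : α × Bool} {w : List (α × Bool)}
    (h : FreeGroup.reduce (c :: d :: w) = c :: d :: w) :
    ¬(c.1 = d.1 ∧ c.2 = !d.2) := by
  intro hc
  have h1 : FreeGroup.reduce (d :: w) = d :: w := reduced_cons h
  rw [FreeGroup.reduce.cons, h1] at h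
  dsimp only at h
  rw [if_pos hc] at h
  have := congrArg List.length h
  simp only [List.length_cons] at this
  omega

lemma reduced_invRev {w : List (α × Bool)} (h : FreeGroup.reduce w = w) :
    FreeGroup.reduce (FreeGroup.invRev w) = FreeGroup.invRev w := by
  rw [FreeGroup.reduce_invRev, h]

lemma invRev_append {w v : List (α × Bool)} :
    FreeGroup.invRev (w ++ v) = FreeGroup.invRev v ++ FreeGroup.invRev w := by
  simp [FreeGroup.invRev]

lemma invRev_singleton (p : α × Bool) :
    FreeGroup.invRev [p] = [(p.1, !p.2)] := by
  simp [FreeGroup.invRev]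

lemma reduced_append_singleton {u : List (α × Bool)} {p : α × Bool}
    (h : FreeGroup.reduce (u ++ [p]) = u ++ [p]) : FreeGroup.reduce u = u := by
  have h2 := reduced_invRev h
  rw [invRev_append, invRev_singleton] at h2
  have h3' := reduced_cons h2
  have h3 : FreeGroup.reduce (FreeGroup.invRev u) = FreeGroup.invRev u := h3'
  have h4 := reduced_invRev h3
  rwa [FreeGroup.invRev_invRev] at h4

/-- appending reduced words with no cancellation at the junction is reduced -/
lemma reduced_append {w v : List (α × Bool)}
    (hw : FreeGroup.reduce w = w) (hv : FreeGroup.reduce v = v)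
    (hj : ∀ p q, w.getLast? = some p → v.head? = some q → ¬(p.1 = q.1 ∧ p.2 = !q.2)) :
    FreeGroup.reduce (w ++ v) = w ++ v := by
  induction w with
  | nil => simpa using hv
  | cons c w' ih =>
    have hw' : FreeGroup.reduce w' = w' := reduced_cons hw
    cases w' with
    | nil =>
      simp only [List.nil_append, List.singleton_append]
      rw [FreeGroup.reduce.cons, hv]
      cases v with
      | nil => rfl
      | cons q t =>
        dsimp only
        rw [if_neg]
        exact hj c q rfl rfl
    | cons d w'' =>
      have hjunc : ∀ p q, (d :: w'').getLast? = some p → v.head? = some q →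
          ¬(p.1 = q.1 ∧ p.2 = !q.2) := by
        intro p q hp hq
        refine hj p q ?_ hq
        rwa [List.getLast?_cons_cons]
      have ih' := ih hw' hjunc
      have : (d :: w'') ++ v = d :: (w'' ++ v) := rfl
      rw [List.cons_append, FreeGroup.reduce.cons, ih', this]
      dsimp only
      rw [if_neg (reduced_no_cancel hw)]

lemma of_pow_eq_mk (a : α) (n : ℕ) :
    FreeGroup.of a ^ n = FreeGroup.mk (List.replicate n (a, true)) := by
  conv_lhs => rw [← FreeGroup.mk_toWord (x := FreeGroup.of a ^ n)]
  rw [FreeGroup.toWord_of_pow]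

lemma mk_cancel_front (a : α) (b : Bool) (t : List (α × Bool)) :
    FreeGroup.mk ((a, !b) :: (a, b) :: t) = FreeGroup.mk t := by
  rw [← FreeGroup.quot_mk_eq_mk, ← FreeGroup.quot_mk_eq_mk]
  exact Quot.sound (FreeGroup.Red.Step.cons_not_rev)

lemma mk_cancel_back (a : α) (b : Bool) (u : List (α × Bool)) :
    FreeGroup.mk (u ++ [(a, !b), (a, b)]) = FreeGroup.mk u := by
  rw [← FreeGroup.quot_mk_eq_mk, ← FreeGroup.quot_mk_eq_mk]
  have : FreeGroup.Red.Step (u ++ (a, !b) :: (a, b) :: []) (u ++ []) :=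
    FreeGroup.Red.Step.not_rev
  have h := Quot.sound this
  simp only [List.append_nil] at h
  exact h

lemma single_eq_zpow (a : α) (b : Bool) :
    ∃ ε : ℤ, FreeGroup.mk [(a, b)] = FreeGroup.of a ^ ε ∧ (ε = 1 ∨ ε = -1) := by
  cases b with
  | true =>
    refine ⟨1, ?_, Or.inl rfl⟩
    rw [zpow_one]
    rfl
  | false =>
    refine ⟨-1, ?_, Or.inr rfl⟩
    rw [zpow_neg, zpow_one]
    have h1 : (FreeGroup.of a : FreeGroup α) = FreeGroup.mk [(a, true)] := rfl
    rw [h1, FreeGroup.inv_mk]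
    congr 1

lemma commute_zpow_pow (a : α) (ε : ℤ) (n : ℕ) :
    FreeGroup.of a ^ ε * FreeGroup.of a ^ n = FreeGroup.of a ^ n * FreeGroup.of a ^ ε := by
  rw [← zpow_natCast (FreeGroup.of a) n, ← zpow_add, ← zpow_add, add_comm]

/-- Centralizer of a positive power of a generator: only powers of the generator. -/
lemma exists_zpow_of_commute_pow (a : α) {n : ℕ} (hn : n ≠ 0) (x : FreeGroup α)
    (hx : x * FreeGroup.of a ^ n = FreeGroup.of a ^ n * x) :
    ∃ k : ℤ, x = FreeGroup.of a ^ k := by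
  generalize hm : x.norm = m
  induction m using Nat.strong_induction_on generalizing x with
  | _ m ih =>
  subst hm
  have hred : FreeGroup.reduce x.toWord = x.toWord := FreeGroup.reduce_toWord x
  rcases hw : x.toWord with _ | ⟨c, t⟩
  · exact ⟨0, by rw [zpow_zero, ← FreeGroup.toWord_eq_nil_iff, hw]⟩
  · rw [hw] at hred
    by_cases hhead : c.1 = a
    · -- strip from the front
      obtain ⟨a', b⟩ := c
      dsimp at hhead; subst a' 
      obtain ⟨ε, hε, hε1⟩ := single_eq_zpow a (!b)
      set y : FreeGroup α := FreeGroup.mk [(a, !b)] with hy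
      have hyx : y * x = FreeGroup.mk t := by
        rw [hy]
        conv_lhs => rw [← FreeGroup.mk_toWord (x := x), hw]
        rw [FreeGroup.mul_mk]
        exact mk_cancel_front a b t
      have htred : FreeGroup.reduce t = t := reduced_cons hred
      have hnorm : (FreeGroup.mk t).norm < x.norm := by
        have h1 : (FreeGroup.mk t).toWord = t := by rw [FreeGroup.toWord_mk, htred]
        unfold FreeGroup.norm
        rw [h1, hw]
        simp
      have hyA : y * FreeGroup.of a ^ n = FreeGroup.of a ^ n * y := by
        rw [hε]; exact commute_zpow_pow a ε n
      have hcomm : (FreeGroup.mk t) * FreeGroup.of a ^ n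
          = FreeGroup.of a ^ n * (FreeGroup.mk t) := by
        rw [← hyx, mul_assoc, hx, ← mul_assoc, hyA, mul_assoc]
      obtain ⟨k, hk⟩ := ih _ hnorm _ hcomm rfl
      refine ⟨k - ε, ?_⟩
      have : x = y⁻¹ * FreeGroup.mk t := by rw [← hyx]; group
      rw [this, hk, hε, ← zpow_neg, ← zpow_add, neg_add_eq_sub]
    · -- the word is nonempty; look at the last letter
      have hne : x.toWord ≠ [] := by rw [hw]; simp
      obtain ⟨u, p, hu⟩ : ∃ u p, x.toWord = u ++ [p] := by
        rcases List.eq_nil_or_concat x.toWord with h | ⟨u, p, h⟩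
        · exact absurd h hne
        · exact ⟨u, p, by simpa using h⟩
      by_cases hlast : p.1 = a
      · -- strip from the back
        obtain ⟨a', b⟩ := p
        dsimp at hlast; subst a' 
        obtain ⟨ε, hε, hε1⟩ := single_eq_zpow a (!b)
        set y : FreeGroup α := FreeGroup.mk [(a, !b)] with hy
        have hured : FreeGroup.reduce (u ++ [(a, b)]) = u ++ [(a, b)] := by
          rw [← hu]; exact FreeGroup.reduce_toWord x
        have huu : FreeGroup.reduce u = u := reduced_append_singleton hured
        have hxy : x * y = FreeGroup.mk u := by
          rw [hy]
          conv_lhs => rw [← FreeGroup.mk_toWord (x := x), hu]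
          rw [FreeGroup.mul_mk]
          have h5 : (u ++ [(a, b)]) ++ [(a, !b)] = u ++ [(a, b), (a, !b)] := by simp
          rw [h5]
          have h6 := mk_cancel_back a (!b) u
          simpa using h6
        have hnorm : (FreeGroup.mk u).norm < x.norm := by
          have h1 : (FreeGroup.mk u).toWord = u := by rw [FreeGroup.toWord_mk, huu]
          unfold FreeGroup.norm
          rw [h1, hu]
          simp
        have hyA : y * FreeGroup.of a ^ n = FreeGroup.of a ^ n * y := by
          rw [hε]; exact commute_zpow_pow a ε n
        have hcomm : (FreeGroup.mk u) * FreeGroup.of a ^ n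
            = FreeGroup.of a ^ n * (FreeGroup.mk u) := by
          rw [← hxy, mul_assoc, hyA, ← mul_assoc, hx, mul_assoc]
        obtain ⟨k, hk⟩ := ih _ hnorm _ hcomm rfl
        refine ⟨k - ε, ?_⟩
        have : x = FreeGroup.mk u * y⁻¹ := by rw [← hxy]; group
        rw [this, hk, hε, ← zpow_neg, ← zpow_add]
        ring_nf
      · -- core case : contradiction
        exfalso
        set R : List (α × Bool) := List.replicate n (a, true) with hR
        have hRred : FreeGroup.reduce R = R := FreeGroup.reduce_replicate n (a, true)
        obtain ⟨m', hm'⟩ : ∃ m', n = m' + 1 := ⟨n - 1, by omega⟩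
        have hRheads : R.head? = some (a, true) := by rw [hR, hm', List.replicate_succ]; rfl
        have hRlast : R.getLast? = some (a, true) := by
          rw [hR, hm', List.replicate_succ', List.getLast?_concat]
        have hwlast : x.toWord.getLast? = some p := by
          rw [hu, List.getLast?_concat]
        have hwhead : x.toWord.head? = some c := by rw [hw]; rfl
        have e1 : FreeGroup.reduce (x.toWord ++ R) = x.toWord ++ R := by
          apply reduced_append (FreeGroup.reduce_toWord x) hRred
          intro p' q' hp' hq'
          rw [hwlast] at hp'; rw [hRheads] at hq'
          cases hp'; cases hq'
          intro h'
          exact hlast h'.1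
        have e2 : FreeGroup.reduce (R ++ x.toWord) = R ++ x.toWord := by
          apply reduced_append hRred (FreeGroup.reduce_toWord x)
          intro p' q' hp' hq'
          rw [hRlast] at hp'; rw [hwhead] at hq'
          cases hp'; cases hq'
          intro h'
          exact hhead h'.1.symm
        have key : x.toWord ++ R = R ++ x.toWord := by
          have h1 : x * FreeGroup.of a ^ n = FreeGroup.mk (x.toWord ++ R) := by
            rw [hR, of_pow_eq_mk]
            conv_lhs => rw [← FreeGroup.mk_toWord (x := x)]
            rw [FreeGroup.mul_mk]
          have h2 : FreeGroup.of a ^ n * x = FreeGroup.mk (R ++ x.toWord) := by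
            rw [hR, of_pow_eq_mk]
            conv_lhs => rw [← FreeGroup.mk_toWord (x := x)]
            rw [FreeGroup.mul_mk]
          have := hx
          rw [h1, h2] at this
          have := congrArg FreeGroup.toWord this
          rwa [FreeGroup.toWord_mk, FreeGroup.toWord_mk, e1, e2] at this
        have : some c = some (a, true) := by
          have h1 : (x.toWord ++ R).head? = some c := by rw [hw]; rfl
          have h2 : (R ++ x.toWord).head? = some (a, true) := by
            rw [hR, hm', List.replicate_succ]; rfl
          rw [← h1, key, h2]
        have := Option.some.inj this
        exact hhead (by rw [this])

lemma zpow_toWord (a : α) (k : ℤ) (hk : k ≠ 0) :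
    ∃ bb : Bool, (FreeGroup.of a ^ k).toWord = List.replicate k.natAbs (a, bb) := by
  rcases k with m | m
  · refine ⟨true, ?_⟩
    rw [Int.ofNat_eq_coe, zpow_natCast, FreeGroup.toWord_of_pow]
    rfl
  · refine ⟨false, ?_⟩
    rw [zpow_negSucc, FreeGroup.toWord_inv, FreeGroup.toWord_of_pow]
    simp [FreeGroup.invRev]

lemma zpow_of_ne_one (a : α) {k : ℤ} (hk : k ≠ 0) : FreeGroup.of a ^ k ≠ 1 := by
  intro h
  obtain ⟨bb, hbb⟩ := zpow_toWord a k hk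
  have h1 : (FreeGroup.of a ^ k).toWord = [] := by rw [h]; exact FreeGroup.toWord_one
  rw [hbb] at h1
  have : k.natAbs = 0 := by simpa using congrArg List.length h1
  omega

lemma zpow_clash {a b : α} (hab : a ≠ b) {k l : ℤ} (hk : k ≠ 0)
    (h : FreeGroup.of a ^ k = FreeGroup.of b ^ l) : False := by
  have hl : l ≠ 0 := by
    rintro rfl
    exact zpow_of_ne_one a hk (by simpa using h)
  obtain ⟨b1, hb1⟩ := zpow_toWord a k hk
  obtain ⟨b2, hb2⟩ := zpow_toWord b l hl
  rw [h, hb2] at hb1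
  obtain ⟨m1, hm1⟩ : ∃ m1, l.natAbs = m1 + 1 := ⟨l.natAbs - 1, by omega⟩
  obtain ⟨m2, hm2⟩ : ∃ m2, k.natAbs = m2 + 1 := ⟨k.natAbs - 1, by omega⟩
  rw [hm1, hm2, List.replicate_succ, List.replicate_succ] at hb1
  have := (List.cons.injEq _ _ _ _ ▸ hb1).1
  injection this with h1 h2
  exact hab h1.symm

lemma eq_one_of_commute_two {a b : α} (hab : a ≠ b) (x : FreeGroup α)
    (ha : x * FreeGroup.of a = FreeGroup.of a * x)
    (hb : x * FreeGroup.of b = FreeGroup.of b * x) : x = 1 := by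
  obtain ⟨k, hk⟩ := exists_zpow_of_commute_pow a (n := 1) one_ne_zero x (by simpa using ha)
  obtain ⟨l, hl⟩ := exists_zpow_of_commute_pow b (n := 1) one_ne_zero x (by simpa using hb)
  by_cases hk0 : k = 0
  · rw [hk, hk0, zpow_zero]
  · exact absurd (hk ▸ hl) (fun h => zpow_clash hab hk0 h)

end Words

section SubsingletonGen

lemma freegroup_subsingleton_comm {T : Type*} [Subsingleton T] (p q : FreeGroup T) :
    p * q = q * p := by
  rcases isEmpty_or_nonempty T with hT | hT
  · classical
    have hall : ∀ z : FreeGroup T, z = 1 := by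
      intro z
      rw [← FreeGroup.toWord_eq_nil_iff]
      rcases h : z.toWord with _ | ⟨c, t⟩
      · rfl
      · exact (hT.false c.1).elim
    rw [hall p, hall q]
  · obtain ⟨t⟩ := hT
    have hall : ∀ z : FreeGroup T, ∃ k : ℤ, z = FreeGroup.of t ^ k := by
      intro z
      induction z using FreeGroup.induction_on with
      | C1 => exact ⟨0, by simp⟩
      | of s => exact ⟨1, by rw [Subsingleton.elim s t, zpow_one]⟩
      | inv_of s hs =>
        obtain ⟨k, hk⟩ := hs
        exact ⟨-k, by rw [hk, zpow_neg]⟩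
      | mul u v hu hv =>
        obtain ⟨k, hk⟩ := hu
        obtain ⟨l, hl⟩ := hv
        exact ⟨k + l, by rw [hk, hl, zpow_add]⟩
    obtain ⟨k, hk⟩ := hall p
    obtain ⟨l, hl⟩ := hall q
    rw [hk, hl, ← zpow_add, ← zpow_add, add_comm]

lemma commute_of_subsingleton_gen (H : Type*) [Group H] [IsFreeGroup H]
    (hs : Subsingleton (IsFreeGroup.Generators H)) (u v : H) : u * v = v * u := by
  have e := IsFreeGroup.toFreeGroup (G := H)
  apply e.injective
  rw [map_mul, map_mul]
  exact freegroup_subsingleton_comm _ _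

/-- In a free group in which all elements commute, there is a "cyclic generator". -/
lemma exists_gen (H : Type*) [Group H] [IsFreeGroup H]
    (hcomm : ∀ u v : H, u * v = v * u) :
    ∃ c : H, (∀ x : H, ∃ k : ℤ, x = c ^ k) ∧ (∀ j : ℤ, c ^ j = 1 → j = 0 ∨ c = 1) := by
  classical
  set T := IsFreeGroup.Generators H with hT
  have e := IsFreeGroup.toFreeGroup (G := H)
  rcases isEmpty_or_nonempty T with hT0 | hT0
  · refine ⟨1, fun x => ⟨0, ?_⟩, fun j _ => Or.inr rfl⟩
    apply e.injective
    rw [zpow_zero, map_one]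
    rcases h : (e x).toWord with _ | ⟨c, t⟩
    · rw [← FreeGroup.toWord_eq_nil_iff, h]
    · exact (hT0.false c.1).elim
  · obtain ⟨t⟩ := hT0
    have hsub : ∀ t' : T, t' = t := by
      intro t'
      by_contra hne
      have h1 : FreeGroup.of t' * FreeGroup.of t = FreeGroup.of t * FreeGroup.of t' := by
        have := hcomm (e.symm (FreeGroup.of t')) (e.symm (FreeGroup.of t))
        have h2 := congrArg e this
        rwa [map_mul, map_mul, e.apply_symm_apply, e.apply_symm_apply] at h2
      obtain ⟨k, hk⟩ := exists_zpow_of_commute_pow t (n := 1) one_ne_zero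
        (FreeGroup.of t') (by simpa using h1)
      have hk0 : k ≠ 0 := by
        rintro rfl
        simp only [zpow_zero] at hk
        exact FreeGroup.of_ne_one t' hk
      obtain ⟨bb, hbb⟩ := zpow_toWord t k hk0
      rw [← hk, FreeGroup.toWord_of] at hbb
      obtain ⟨m1, hm1⟩ : ∃ m1, k.natAbs = m1 + 1 := ⟨k.natAbs - 1, by omega⟩
      rw [hm1, List.replicate_succ] at hbb
      have h3 := (List.cons.injEq _ _ _ _ ▸ hbb).1
      exact hne (by injection h3)
    haveI : Subsingleton T := ⟨fun t1 t2 => by rw [hsub t1, hsub t2]⟩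
    refine ⟨e.symm (FreeGroup.of t), fun x => ?_, fun j hj => ?_⟩
    · -- every element is a power
      have hall : ∀ z : FreeGroup T, ∃ k : ℤ, z = FreeGroup.of t ^ k := by
        intro z
        induction z using FreeGroup.induction_on with
        | C1 => exact ⟨0, by simp⟩
        | of s => exact ⟨1, by rw [Subsingleton.elim s t, zpow_one]⟩
        | inv_of s hs =>
          obtain ⟨k, hk⟩ := hs
          exact ⟨-k, by rw [hk, zpow_neg]⟩
        | mul u v hu hv =>
          obtain ⟨k, hk⟩ := hu
          obtain ⟨l, hl⟩ := hv
          exact ⟨k + l, by rw [hk, hl, zpow_add]⟩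
      obtain ⟨k, hk⟩ := hall (e x)
      refine ⟨k, ?_⟩
      apply e.injective
      rw [map_zpow, hk, e.apply_symm_apply]
    · -- power injectivity
      by_cases hj0 : j = 0
      · exact Or.inl hj0
      · exfalso
        have h1 := congrArg e hj
        rw [map_zpow, map_one, e.apply_symm_apply] at h1
        exact zpow_of_ne_one t hj0 h1

end SubsingletonGen

section Normal

/-- A normal subgroup of a free group (with two distinct generators) in which all
elements commute is trivial. -/
lemma normal_comm_eq_bot {α : Type*} {a b : α} (hab : a ≠ b)
    (K : Subgroup (FreeGroup α)) (hnorm : K.Normal)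
    (hcomm : ∀ x y, x ∈ K → y ∈ K → x * y = y * x) : K = ⊥ := by
  classical
  haveI : IsFreeGroup ↥K := subgroupIsFreeOfIsFree K
  obtain ⟨c, hgen, hinj⟩ := exists_gen ↥K (fun u v => by
    apply Subtype.ext
    simp only [Subgroup.coe_mul]
    exact hcomm u v u.2 v.2)
  by_cases hc : (c : FreeGroup α) = 1
  · rw [Subgroup.eq_bot_iff_forall]
    intro x hx
    obtain ⟨k, hk⟩ := hgen ⟨x, hx⟩
    have := congrArg (Subtype.val) hk
    simpa [hc] using this
  · exfalso
    have hcK : (c : FreeGroup α) ∈ K := c.2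
    have hpowinj : ∀ j : ℤ, (c : FreeGroup α) ^ j = 1 → j = 0 := by
      intro j hj
      have h1 : c ^ j = 1 := by
        apply Subtype.ext
        simpa using hj
      rcases hinj j h1 with h | h
      · exact h
      · exact absurd (congrArg Subtype.val h) hc
    have hconj : ∀ g : FreeGroup α, ∃ n : ℤ, g * c * g⁻¹ = (c : FreeGroup α) ^ n := by
      intro g
      have hmem : g * c * g⁻¹ ∈ K := hnorm.conj_mem _ hcK g
      obtain ⟨n, hn⟩ := hgen ⟨_, hmem⟩
      refine ⟨n, ?_⟩
      have := congrArg Subtype.val hn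
      simpa using this
    have hpm : ∀ g : FreeGroup α, g * c * g⁻¹ = c ∨ g * c * g⁻¹ = (c : FreeGroup α)⁻¹ := by
      intro g
      obtain ⟨n, hn⟩ := hconj g
      obtain ⟨m, hm⟩ := hconj g⁻¹
      rw [inv_inv] at hm
      have hc1 : (c : FreeGroup α) = ((c : FreeGroup α) ^ m) ^ n := by
        have e0 : (c : FreeGroup α) = g⁻¹ * (g * (c : FreeGroup α) * g⁻¹) * g := by group
        have e1 : g⁻¹ * ((c : FreeGroup α) ^ n) * g = (g⁻¹ * (c : FreeGroup α) * g) ^ n := by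
          have := conj_zpow (i := n) (a := g⁻¹) (b := (c : FreeGroup α))
          rw [inv_inv] at this
          exact this.symm
        have e2 : g⁻¹ * (c : FreeGroup α) * g = (c : FreeGroup α) ^ m := hm
        calc (c : FreeGroup α) = g⁻¹ * (g * (c : FreeGroup α) * g⁻¹) * g := e0
          _ = g⁻¹ * ((c : FreeGroup α) ^ n) * g := by rw [hn]
          _ = (g⁻¹ * (c : FreeGroup α) * g) ^ n := e1
          _ = ((c : FreeGroup α) ^ m) ^ n := by rw [e2]
      rw [← zpow_mul] at hc1
      have h2 : (c : FreeGroup α) ^ (m * n - 1) = 1 := by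
        rw [zpow_sub, zpow_one, ← hc1]
        group
      have h3 : m * n = 1 := by have := hpowinj _ h2; omega
      have h4 : n = 1 ∨ n = -1 := by
        rcases Int.isUnit_iff.mp (IsUnit.of_mul_eq_one (a := n) m (by linarith [mul_comm m n])) with h | h
        · exact Or.inl h
        · exact Or.inr h
      rcases h4 with h | h
      · left; rw [hn, h, zpow_one]
      · right; rw [hn, h, zpow_neg, zpow_one]
    have hsq : ∀ g : FreeGroup α, (g * g) * c * (g * g)⁻¹ = c := by
      intro g
      rcases hpm g with h | h
      · have : (g * g) * (c : FreeGroup α) * (g * g)⁻¹ = g * (g * c * g⁻¹) * g⁻¹ := by group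
        rw [this, h, h]
      · have : (g * g) * (c : FreeGroup α) * (g * g)⁻¹ = g * (g * c * g⁻¹) * g⁻¹ := by group
        rw [this, h]
        have h5 : g * (c : FreeGroup α)⁻¹ * g⁻¹ = (g * c * g⁻¹)⁻¹ := by group
        rw [h5, h, inv_inv]
    have hsqcomm : ∀ g : FreeGroup α, (c : FreeGroup α) * (g * g) = (g * g) * c := by
      intro g
      exact (mul_inv_eq_iff_eq_mul.mp (hsq g)).symm
    have ha : (c : FreeGroup α) * (FreeGroup.of a) ^ 2 = (FreeGroup.of a) ^ 2 * c := by
      have := hsqcomm (FreeGroup.of a); rwa [← pow_two] at this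
    have hb : (c : FreeGroup α) * (FreeGroup.of b) ^ 2 = (FreeGroup.of b) ^ 2 * c := by
      have := hsqcomm (FreeGroup.of b); rwa [← pow_two] at this
    obtain ⟨k, hk⟩ := exists_zpow_of_commute_pow a (n := 2) (by norm_num) _ ha
    obtain ⟨l, hl⟩ := exists_zpow_of_commute_pow b (n := 2) (by norm_num) _ hb
    have hk0 : k ≠ 0 := by
      rintro rfl
      rw [zpow_zero] at hk
      exact hc hk
    exact zpow_clash hab hk0 (hk ▸ hl)

/-- A nonabelian pair inside a subgroup of a free group yields a nonabelian free
subgroup contained in it. -/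
lemma exists_free_pair {α : Type u} (K : Subgroup (FreeGroup α)) (x y : FreeGroup α)
    (hx : x ∈ K) (hy : y ∈ K) (hxy : x * y ≠ y * x) :
    ∃ (T : Type u) (_ : Nontrivial T) (μ : FreeGroup T →* FreeGroup α),
      Function.Injective μ ∧ ∀ z, μ z ∈ K := by
  classical
  set H : Subgroup (FreeGroup α) := Subgroup.closure {x, y} with hH
  have hHK : H ≤ K := by
    rw [hH, Subgroup.closure_le]
    rintro z (rfl | rfl)
    · exact hx
    · simpa using hy
  haveI : IsFreeGroup ↥H := subgroupIsFreeOfIsFree H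
  have hxH : x ∈ H := Subgroup.subset_closure (by simp)
  have hyH : y ∈ H := Subgroup.subset_closure (by simp)
  have hnontriv : Nontrivial (IsFreeGroup.Generators ↥H) := by
    by_contra hns
    haveI hsub : Subsingleton (IsFreeGroup.Generators ↥H) :=
      not_nontrivial_iff_subsingleton.mp hns
    have := commute_of_subsingleton_gen ↥H hsub ⟨x, hxH⟩ ⟨y, hyH⟩
    exact hxy (congrArg Subtype.val this)
  set e := IsFreeGroup.toFreeGroup (G := ↥H)
  refine ⟨IsFreeGroup.Generators ↥H, hnontriv,
    H.subtype.comp e.symm.toMonoidHom, ?_, ?_⟩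
  · exact H.subtype_injective.comp e.symm.injective
  · intro z
    exact hHK (e.symm z).2

end Normal

lemma noncommProd_eq_of_single {β : Type*} [Monoid β] {ι : Type*} [Fintype ι]
    (F : ι → β) (hcomm) (r₀ : ι) (h1 : ∀ r, r ≠ r₀ → F r = 1) :
    Finset.univ.noncommProd F hcomm = F r₀ := by
  classical
  have h2 : Finset.univ.noncommProd F hcomm
      = (insert r₀ (Finset.univ.erase r₀)).noncommProd F
        (by rw [Finset.insert_erase (Finset.mem_univ r₀)]; exact hcomm) :=
    Finset.noncommProd_congr (Finset.insert_erase (Finset.mem_univ r₀)).symm (fun _ _ => rfl) _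
  rw [h2, Finset.noncommProd_insert_of_notMem _ _ _ _ (Finset.notMem_erase _ _),
    Finset.noncommProd_eq_pow_card _ _ _ 1, one_pow, mul_one]
  intro x hx
  exact h1 x (Finset.mem_erase.mp hx).1

lemma noncommProd_eq_one' {β : Type*} [Monoid β] {ι : Type*} [Fintype ι]
    (F : ι → β) (hcomm) (h1 : ∀ r, F r = 1) :
    Finset.univ.noncommProd F hcomm = 1 := by
  rw [Finset.noncommProd_eq_pow_card _ _ _ 1 (fun x _ => h1 x), one_pow]

/-- Reindexing/extension-by-one embedding of a product over a finset into the full product. -/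
lemma exists_pi_embed {k c : ℕ} (M : Fin k → Type*) [∀ j, Group (M j)]
    (s : Finset (Fin k)) (e : Fin c ≃ {x : Fin k // x ∈ s})
    (W : Fin c → Type*) [∀ r, Group (W r)]
    (μ : ∀ r, W r →* M ((e r) : Fin k)) (hμ : ∀ r, Function.Injective (μ r)) :
    ∃ P : ((r : Fin c) → W r) →* ((j : Fin k) → M j),
      Function.Injective P ∧
      (∀ f r, P f ((e r) : Fin k) = μ r (f r)) ∧
      (∀ f j, j ∉ s → P f j = 1) := by
  classical
  have hcomm : Pairwise fun r r' : Fin c => ∀ (x : W r) (y : W r'),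
      Commute ((MonoidHom.mulSingle M ((e r) : Fin k)).comp (μ r) x)
              ((MonoidHom.mulSingle M ((e r') : Fin k)).comp (μ r') y) := by
    intro r r' hrr' x y
    simp only [MonoidHom.coe_comp, Function.comp_apply, MonoidHom.mulSingle_apply]
    apply Pi.mulSingle_commute
    intro h
    exact hrr' (e.injective (Subtype.ext h))
  set P := MonoidHom.noncommPiCoprod _ hcomm with hP
  have hcomm2 : ∀ (f : (r : Fin c) → W r), ∀ r ∈ Finset.univ, ∀ r' ∈ Finset.univ,
      r ≠ r' → Commute (Pi.mulSingle (M := M) ((e r) : Fin k) (μ r (f r)))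
        (Pi.mulSingle (M := M) ((e r') : Fin k) (μ r' (f r'))) := by
    intro f r _ r' _ h
    have := hcomm h (f r) (f r')
    simpa only [MonoidHom.coe_comp, Function.comp_apply,
      MonoidHom.mulSingle_apply] using this
  have heval : ∀ (f : (r : Fin c) → W r) (j : Fin k),
      P f j = Finset.univ.noncommProd
        (fun r => Pi.mulSingle (M := M) ((e r) : Fin k) (μ r (f r)) j)
        (fun r hr r' hr' h => ((hcomm2 f r hr r' hr' h).map (Pi.evalMonoidHom M j))) := by
    intro f j
    have h3 : P f = Finset.univ.noncommProd
        (fun r => Pi.mulSingle (M := M) ((e r) : Fin k) (μ r (f r))) (hcomm2 f) := by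
      rw [hP]
      rfl
    have h4 := congrArg (Pi.evalMonoidHom M j) h3
    exact h4.trans (Finset.map_noncommProd _ _ _ (Pi.evalMonoidHom M j))
  have hcoord : ∀ (f : (r : Fin c) → W r) (r : Fin c), P f ((e r) : Fin k) = μ r (f r) := by
    intro f r₀
    rw [heval]
    refine (noncommProd_eq_of_single _ _ r₀ ?_).trans ?_
    swap
    · exact Pi.mulSingle_eq_same _ _
    · intro r hr
      apply Pi.mulSingle_eq_of_ne
      intro h
      exact hr (e.injective (Subtype.ext h.symm))
  refine ⟨P, ?_, hcoord, ?_⟩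
  · intro f g hfg
    funext r
    apply hμ r
    rw [← hcoord f r, ← hcoord g r, hfg]
  · intro f j hj
    rw [heval]
    apply noncommProd_eq_one'
    intro r
    apply Pi.mulSingle_eq_of_ne
    intro h
    exact hj (h ▸ (e r).2)

end FreeGroupAux


/-- `HasFreeProd H k` says that a direct product of `k` nonabelian free groups
(each free on a set with at least two elements) embeds into `H`. -/
def HasFreeProd (H : Type*) [Group H] (k : ℕ) : Prop :=
  ∃ (S : Fin k → Type) (_ : ∀ i, Nontrivial (S i))
    (φ : ((i : Fin k) → FreeGroup (S i)) →* H), Function.Injective φ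

/-- The product rank of a group `H`: the supremum of the integers `k` such that a
direct product of `k` nonabelian free groups embeds into `H`. -/
noncomputable def prodRank (H : Type*) [Group H] : ℕ∞ :=
  sSup {n : ℕ∞ | ∃ k : ℕ, n = k ∧ HasFreeProd H k}

open FreeGroupAux

/-- If `1 → N → G → Q → 1` is a short exact sequence of groups, then
`rk_prod(G) ≤ rk_prod(N) + rk_prod(Q)`. -/
theorem prodRank_le_add_of_exact {N G Q : Type*} [Group N] [Group G] [Group Q]
    (i : N →* G) (p : G →* Q) (hi : Function.Injective i) (hp : Function.Surjective p)
    (hexact : i.range = p.ker) :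
    prodRank G ≤ prodRank N + prodRank Q := by
  apply sSup_le
  rintro n ⟨k, rfl, S, hS, φ, hφ⟩
  classical
  set ψ : ((j : Fin k) → FreeGroup (S j)) →* Q := p.comp φ with hψdef
  set Kk : (j : Fin k) → Subgroup (FreeGroup (S j)) :=
    fun j => (ψ.comp (MonoidHom.mulSingle (fun j => FreeGroup (S j)) j)).ker with hKk
  set A : Finset (Fin k) :=
    Finset.univ.filter (fun j => ¬ ∀ x y, x ∈ Kk j → y ∈ Kk j → x * y = y * x) with hA
  have hmemKk : ∀ (j : Fin k) (w : FreeGroup (S j)),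
      w ∈ Kk j ↔ ψ (Pi.mulSingle j w) = 1 := by
    intro j w
    rw [hKk]
    simp [MonoidHom.mem_ker, MonoidHom.mulSingle_apply]
  -- N side
  have hN : HasFreeProd N A.card := by
    have hdata : ∀ j₀ : Fin k, j₀ ∈ A → ∃ (T : Type) (_ : Nontrivial T)
        (μ : FreeGroup T →* FreeGroup (S j₀)), Function.Injective μ ∧ ∀ z, μ z ∈ Kk j₀ := by
      intro j₀ hj₀
      rw [hA, Finset.mem_filter] at hj₀
      have hr2 := hj₀.2
      push_neg at hr2
      obtain ⟨x, y, hx, hy, hxy⟩ := hr2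
      exact exists_free_pair _ x y hx hy hxy
    choose T hT μ hμinj hμmem using hdata
    let e : Fin A.card ≃ {x : Fin k // x ∈ A} :=
      ((Fintype.equivFin _).trans (finCongr (Fintype.card_coe A))).symm
    obtain ⟨P, hPinj, hPcoord, hPout⟩ := exists_pi_embed (fun j => FreeGroup (S j)) A e
      (fun r => FreeGroup (T (e r).1 (e r).2)) (fun r => μ (e r).1 (e r).2)
      (fun r => hμinj (e r).1 (e r).2)
    have hker : ∀ f, ψ (P f) = 1 := by
      intro f
      rw [← Finset.noncommProd_mulSingle (P f)]
      refine (Finset.map_noncommProd _ _ _ ψ).trans ?_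
      apply noncommProd_eq_one'
      intro j
      by_cases hj : j ∈ A
      · obtain ⟨r, hr⟩ : ∃ r, ((e r : {x : Fin k // x ∈ A}) : Fin k) = j :=
          ⟨e.symm ⟨j, hj⟩, by simp⟩
        subst hr
        rw [hPcoord f r]
        exact (hmemKk _ _).mp (hμmem (e r).1 (e r).2 (f r))
      · rw [hPout f j hj]
        simp
    have hrange : ∀ f, φ (P f) ∈ i.range := by
      intro f
      rw [hexact, MonoidHom.mem_ker]
      exact hker f
    let θ : ((r : Fin A.card) → FreeGroup (T (e r).1 (e r).2)) →* ↥i.range :=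
      (φ.comp P).codRestrict i.range hrange
    have hθinj : Function.Injective θ := by
      intro f g h
      apply hPinj
      apply hφ
      exact congrArg Subtype.val h
    let eqN : N ≃* ↥i.range := MonoidHom.ofInjective hi
    refine ⟨fun r => T (e r).1 (e r).2, fun r => hT (e r).1 (e r).2,
      eqN.symm.toMonoidHom.comp θ, ?_⟩
    intro f g h
    exact hθinj (eqN.symm.injective h)
  -- Q side
  have hQ : HasFreeProd Q Aᶜ.card := by
    let e2 : Fin Aᶜ.card ≃ {x : Fin k // x ∈ Aᶜ} :=
      ((Fintype.equivFin _).trans (finCongr (Fintype.card_coe Aᶜ))).symm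
    obtain ⟨P2, hP2inj, hP2coord, hP2out⟩ := exists_pi_embed (fun j => FreeGroup (S j)) Aᶜ e2
      (fun r => FreeGroup (S (e2 r))) (fun r => MonoidHom.id _) (fun r a b h => h)
    refine ⟨fun r => S (e2 r), fun r => hS _, ψ.comp P2, ?_⟩
    rw [injective_iff_map_eq_one]
    intro f hf
    have hf' : ψ (P2 f) = 1 := hf
    have hg1 : ∀ j, j ∈ Aᶜ → P2 f j = 1 := by
      intro j hj
      have hjA : j ∉ A := Finset.mem_compl.mp hj
      have hcommKk : ∀ x y, x ∈ Kk j → y ∈ Kk j → x * y = y * x := by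
        by_contra hc
        exact hjA (by rw [hA]; exact Finset.mem_filter.mpr ⟨Finset.mem_univ _, hc⟩)
      haveI := hS j
      obtain ⟨s1, s2, hs12⟩ := exists_pair_ne (S j)
      haveI : DecidableEq (S j) := Classical.decEq _
      have hbot : Kk j = ⊥ := normal_comm_eq_bot hs12 (Kk j) (MonoidHom.normal_ker _) hcommKk
      have hcw : ∀ z : FreeGroup (S j), (P2 f j) * z = z * (P2 f j) := by
        intro z
        have hc1 : (P2 f j) * z * (P2 f j)⁻¹ * z⁻¹ ∈ Kk j := by
          rw [hmemKk]
          have hsingle : Pi.mulSingle j ((P2 f j) * z * (P2 f j)⁻¹ * z⁻¹)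
              = (P2 f) * Pi.mulSingle j z * (P2 f)⁻¹ * (Pi.mulSingle j z)⁻¹ := by
            funext j'
            by_cases hjj : j' = j
            · subst hjj
              simp
            · simp [Pi.mulSingle_eq_of_ne hjj]
          rw [hsingle]
          simp [map_mul, map_inv, hf']
        rw [hbot, Subgroup.mem_bot] at hc1
        have h3 : (P2 f j) * z * (P2 f j)⁻¹ = z := mul_inv_eq_one.mp hc1
        have h4 : (P2 f j) * z = z * (P2 f j) := mul_inv_eq_iff_eq_mul.mp h3
        exact h4
      exact eq_one_of_commute_two hs12 (P2 f j) (hcw _) (hcw _)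
    funext r
    have h5 := hP2coord f r
    have h6 := hg1 _ (e2 r).2
    rw [h6] at h5
    exact h5.symm
  have hNle : (A.card : ℕ∞) ≤ prodRank N := le_sSup ⟨A.card, rfl, hN⟩
  have hQle : ((Aᶜ : Finset (Fin k)).card : ℕ∞) ≤ prodRank Q := le_sSup ⟨Aᶜ.card, rfl, hQ⟩
  have hcard : A.card + (Aᶜ : Finset (Fin k)).card = k := by
    rw [Finset.card_add_card_compl]
    simp
  calc (k : ℕ∞) = ((A.card + (Aᶜ : Finset (Fin k)).card : ℕ) : ℕ∞) := by rw [hcard]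
    _ = (A.card : ℕ∞) + (Aᶜ : Finset (Fin k)).card := by push_cast; rfl
    _ ≤ prodRank N + prodRank Q := add_le_add hNle hQle
end

section
/- Let G be a group, let Γ ⊆ G be a subgroup, and let X be a simple G-graph (a graph with a G-action by graph automorphisms, with no loops or multiple edges) on which G acts faithfully on vertices and which is strongly rigid, meaning every injective graph self-map of X coincides with the action of a unique element of G. Suppose that for every injective homomorphism f : Γ → G there exist an injective graph map θ : X → X and a normal subgroup Γ' of Γ such that for every vertex v of X: (i) f(Stab_{Γ'}(v)) ⊆ Stab_G(θ(v)), and (ii) θ(v) is the unique vertex w with f(Stab_{Γ'}(v)) ⊆ Stab_G(w). Then every injective homomorphism Γ → G is equal to conjugation by some element of G (i.e., Γ is rigid in G). -/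
/-- Blueprint for rigidity of subgroups (Proposition 3.5 of the paper).

`G` is a group acting on the vertex set `V` of a simple graph `X` by graph
automorphisms, faithfully on vertices.  The graph is strongly rigid: every
injective graph self-map of `X` coincides with the action of a unique element
of `G`.  If for every injective homomorphism `f : Γ → G` there are an injective
graph map `θ` and a normal subgroup `Γ' ⊴ Γ` such that for every vertex `v`,
`f(Stab_{Γ'}(v)) ⊆ Stab_G(θ v)` and `θ v` is the unique vertex with this
property, then `Γ` is rigid in `G`: every injective homomorphism `Γ → G` is
conjugation by some element of `G`. -/
theorem rigid_of_strongly_rigid_graph {G V : Type*} [Group G] [MulAction G V]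
    (X : SimpleGraph V)
    (hact : ∀ (g : G) (v w : V), X.Adj v w → X.Adj (g • v) (g • w))
    (hfaithful : ∀ g : G, (∀ v : V, g • v = v) → g = 1)
    (hrigid : ∀ θ : V → V, Function.Injective θ →
      (∀ v w : V, X.Adj v w → X.Adj (θ v) (θ w)) → ∃! g : G, ∀ v : V, θ v = g • v)
    (Γ : Subgroup G)
    (hyp : ∀ f : ↥Γ →* G, Function.Injective f →
      ∃ (θ : V → V) (Γ' : Subgroup ↥Γ), Γ'.Normal ∧ Function.Injective θ ∧
        (∀ v w : V, X.Adj v w → X.Adj (θ v) (θ w)) ∧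
        (∀ v : V,
          (∀ γ : ↥Γ, γ ∈ Γ' → (γ : G) • v = v → f γ • θ v = θ v) ∧
          (∀ w : V, (∀ γ : ↥Γ, γ ∈ Γ' → (γ : G) • v = v → f γ • w = w) → w = θ v))) :
    ∀ f : ↥Γ →* G, Function.Injective f →
      ∃ g : G, ∀ x : ↥Γ, f x = g * (x : G) * g⁻¹ := by
  intro f hf
  obtain ⟨θ, Γ', hnorm, hinj, hadj, hθ⟩ := hyp f hf
  obtain ⟨g, hg, -⟩ := hrigid θ hinj hadj
  refine ⟨g, fun γ => ?_⟩
  have key : ∀ v : V, θ ((γ : G) • v) = f γ • θ v := by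
    intro v
    refine ((hθ ((γ : G) • v)).2 (f γ • θ v) ?_).symm
    intro δ hδ hfix
    have hη : γ⁻¹ * δ * γ ∈ Γ' := by
      have := hnorm.conj_mem δ hδ γ⁻¹
      simpa using this
    have hηfix : ((γ⁻¹ * δ * γ : ↥Γ) : G) • v = v := by
      have : ((γ⁻¹ * δ * γ : ↥Γ) : G) • v = (γ : G)⁻¹ • (δ : G) • (γ : G) • v := by
        push_cast
        simp [mul_smul]
      rw [this, hfix]
      simp
    have h1 := (hθ v).1 (γ⁻¹ * δ * γ) hη hηfix
    have h2 : f δ = f γ * f (γ⁻¹ * δ * γ) * (f γ)⁻¹ := by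
      simp [map_mul, map_inv, mul_assoc]
    rw [h2, mul_smul, mul_smul, inv_smul_smul, h1]
  have hfix : ∀ v : V, ((γ : G)⁻¹ * (g⁻¹ * f γ * g)) • v = v := by
    intro v
    have := key v
    rw [hg ((γ : G) • v), hg v] at this
    -- g • (γ • v) = f γ • g • v
    have h3 : (g⁻¹ * f γ * g) • v = (γ : G) • v := by
      rw [mul_smul, mul_smul, ← this, inv_smul_smul]
    rw [mul_smul, h3, inv_smul_smul]
  have := hfaithful _ hfix
  have h4 : g⁻¹ * f γ * g = (γ : G) := by
    have := congrArg (fun x => (γ : G) * x) this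
    simpa [mul_assoc] using this
  calc f γ = g * (g⁻¹ * f γ * g) * g⁻¹ := by group
    _ = g * (γ : G) * g⁻¹ := by rw [h4]
end

section
/- Let G be a group, Γ ⊆ G a subgroup, and X a simple G-graph with faithful G-action on vertices that is strongly rigid. Suppose f : Γ → G is an injective homomorphism, Γ' is a normal subgroup of Γ, and θ : X → X is an injective graph map such that for every vertex v, θ(v) is the unique vertex whose G-stabilizer contains f(Stab_{Γ'}(v)). If θ equals the action of the identity element (i.e., f(Stab_{Γ'}(v)) ⊆ Stab_G(v) for all v, with v the unique such vertex), then for every γ ∈ Γ and every vertex v, one has γ·v = f(γ)·v, and hence f(γ) = γ for all γ ∈ Γ. -/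
/-- The key computation in the proof of Proposition 3.5 of the paper, in the case
`θ = id`.  `G` acts on the vertex set `V` of a simple strongly rigid `G`-graph
`X`, faithfully on vertices.  If `f : Γ → G` is an injective homomorphism,
`Γ' ⊴ Γ` is normal, and for every vertex `v`, `v` is the unique vertex whose
`G`-stabilizer contains `f(Stab_{Γ'}(v))`, then `γ • v = f γ • v` for all
`γ ∈ Γ` and all vertices `v`, and hence `f γ = γ` for all `γ ∈ Γ`. -/
theorem eq_of_theta_id {G V : Type*} [Group G] [MulAction G V]
    (X : SimpleGraph V)
    (hact : ∀ (g : G) (v w : V), X.Adj v w → X.Adj (g • v) (g • w))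
    (hfaithful : ∀ g : G, (∀ v : V, g • v = v) → g = 1)
    (hrigid : ∀ θ : V → V, Function.Injective θ →
      (∀ v w : V, X.Adj v w → X.Adj (θ v) (θ w)) → ∃! g : G, ∀ v : V, θ v = g • v)
    (Γ : Subgroup G) (f : ↥Γ →* G) (hf : Function.Injective f)
    (Γ' : Subgroup ↥Γ) (hnorm : Γ'.Normal)
    (hsub : ∀ v : V, ∀ γ : ↥Γ, γ ∈ Γ' → (γ : G) • v = v → f γ • v = v)
    (huniq : ∀ v w : V,
      (∀ γ : ↥Γ, γ ∈ Γ' → (γ : G) • v = v → f γ • w = w) → w = v) :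
    (∀ (γ : ↥Γ) (v : V), (γ : G) • v = f γ • v) ∧ (∀ γ : ↥Γ, f γ = (γ : G)) := by
  have key : ∀ (γ : ↥Γ) (v : V), (γ : G) • v = f γ • v := by
    intro γ v
    refine (huniq ((γ : G) • v) (f γ • v) ?_).symm
    intro γ' hγ' hfix
    have hδ : γ⁻¹ * γ' * γ ∈ Γ' := Subgroup.Normal.conj_mem' hnorm γ' hγ' γ
    have hδfix : ((γ⁻¹ * γ' * γ : ↥Γ) : G) • v = v := by
      have : ((γ : G)⁻¹ * (γ' : G) * (γ : G)) • v = v := by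
        have := hfix
        rw [smul_smul] at this
        calc ((γ : G)⁻¹ * (γ' : G) * (γ : G)) • v
            = (γ : G)⁻¹ • ((γ' : G) * (γ : G)) • v := by rw [smul_smul, mul_assoc]
          _ = (γ : G)⁻¹ • (γ : G) • v := by rw [this]
          _ = v := inv_smul_smul _ _
      simpa using this
    have := hsub v _ hδ hδfix
    rw [map_mul, map_mul, map_inv] at this
    have h2 : f γ' • f γ • v = f γ • ((f γ)⁻¹ * f γ' * f γ) • v := by
      rw [smul_smul, smul_smul]; congr 1; group
    rw [h2, this]
  refine ⟨key, fun γ => ?_⟩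
  have : ((γ : G)⁻¹ * f γ) = 1 := by
    apply hfaithful
    intro v
    rw [mul_smul, ← key γ v, inv_smul_smul]
  have := eq_of_inv_mul_eq_one this
  exact this.symm
end

section
/- Let X be a Gromov hyperbolic space and H a group acting on X by isometries with unbounded orbits. If H contains two normal subgroups K₁ and K₂ that centralize each other (i.e., every element of K₁ commutes with every element of K₂), then there exists i ∈ {1,2} such that K_i has a finite orbit in the Gromov boundary ∂∞X. -/
open Filter

/-- The Gromov product of `x` and `y` with respect to the basepoint `w`. -/
noncomputable def gromovProd {X : Type*} [MetricSpace X] (w x y : X) : ℝ :=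
  (dist w x + dist w y - dist x y) / 2

/-- `X` is `δ`-hyperbolic in the sense of the four-point Gromov product condition. -/
def IsGromovHyperbolic (X : Type*) [MetricSpace X] (δ : ℝ) : Prop :=
  ∀ w x y z : X, min (gromovProd w x y) (gromovProd w y z) - δ ≤ gromovProd w x z

/-- A sequence converges at infinity if the pairwise Gromov products tend to `∞`. -/
def ConvergesAtInfinity {X : Type*} [MetricSpace X] (w : X) (s : ℕ → X) : Prop :=
  Tendsto (fun p : ℕ × ℕ => gromovProd w (s p.1) (s p.2)) atTop atTop

/-- Sequences converging at infinity, representing points of the Gromov boundary. -/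
def BoundarySeq (X : Type*) [MetricSpace X] (w : X) : Type _ :=
  {s : ℕ → X // ConvergesAtInfinity w s}

/-- Two sequences converging at infinity represent the same boundary point when the
mixed Gromov products tend to `∞`. -/
def bequiv {X : Type*} [MetricSpace X] (w : X) (s t : BoundarySeq X w) : Prop :=
  Tendsto (fun p : ℕ × ℕ => gromovProd w (s.1 p.1) (t.1 p.2)) atTop atTop

/-- The Gromov boundary `∂∞X` of `X`, as equivalence classes of sequences
converging at infinity. -/
def GromovBoundary (X : Type*) [MetricSpace X] (w : X) : Type _ :=
  Quot (bequiv w)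

/-- An isometric group action sends sequences converging at infinity to sequences
converging at infinity; this is the induced action on boundary representatives. -/
noncomputable def smulSeq {H X : Type*} [Group H] [MulAction H X] [MetricSpace X]
    (w : X) (hiso : ∀ (g : H) (x y : X), dist (g • x) (g • y) = dist x y)
    (g : H) (s : BoundarySeq X w) : BoundarySeq X w :=
  ⟨fun n => g • s.1 n, by
    have key : ∀ a b : X,
        gromovProd w a b - dist w (g • w) ≤ gromovProd w (g • a) (g • b) := by
      intro a b
      have h1 : dist w a - dist w (g • w) ≤ dist w (g • a) := by
        have := dist_triangle w (g • w) (g • a)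
        have h2 : dist (g • w) (g • a) = dist w a := hiso g w a
        have h3 : dist w a ≤ dist w (g • w) + dist w (g • a) := by
          calc dist w a = dist (g • w) (g • a) := h2.symm
            _ ≤ dist (g • w) w + dist w (g • a) := dist_triangle _ _ _
            _ = dist w (g • w) + dist w (g • a) := by rw [dist_comm (g • w) w]
        linarith
      have h1' : dist w b - dist w (g • w) ≤ dist w (g • b) := by
        have h2 : dist (g • w) (g • b) = dist w b := hiso g w b
        have h3 : dist w b ≤ dist w (g • w) + dist w (g • b) := by
          calc dist w b = dist (g • w) (g • b) := h2.symm
            _ ≤ dist (g • w) w + dist w (g • b) := dist_triangle _ _ _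
            _ = dist w (g • w) + dist w (g • b) := by rw [dist_comm (g • w) w]
        linarith
      have h4 : dist (g • a) (g • b) = dist a b := hiso g a b
      unfold gromovProd
      rw [h4]
      linarith
    have hs := s.2
    have h5 : Tendsto
        (fun p : ℕ × ℕ => gromovProd w (s.1 p.1) (s.1 p.2) - dist w (g • w))
        atTop atTop := tendsto_atTop_add_const_right _ _ hs
    exact tendsto_atTop_mono (fun p => key (s.1 p.1) (s.1 p.2)) h5⟩

private lemma gp_expand {X : Type*} [MetricSpace X] (w x y : X) :
    gromovProd w x y = (dist w x + dist w y - dist x y) / 2 := rfl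

private lemma gp_nonneg {X : Type*} [MetricSpace X] (w x y : X) :
    0 ≤ gromovProd w x y := by
  have h := dist_triangle x w y
  rw [dist_comm x w] at h
  rw [gp_expand]
  linarith

private lemma gp_comm {X : Type*} [MetricSpace X] (w x y : X) :
    gromovProd w x y = gromovProd w y x := by
  rw [gp_expand, gp_expand, dist_comm x y]; ring

private lemma gp_self {X : Type*} [MetricSpace X] (w x : X) :
    gromovProd w x x = dist w x := by
  rw [gp_expand, dist_self]; ring

private lemma gp_move {X : Type*} [MetricSpace X] (w x y y' : X) :
    gromovProd w x y - dist y y' ≤ gromovProd w x y' := by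
  rw [gp_expand, gp_expand]
  have h1 : dist w y ≤ dist w y' + dist y' y := dist_triangle _ _ _
  have h2 : dist x y' ≤ dist x y + dist y y' := dist_triangle _ _ _
  have h3 : dist y' y = dist y y' := dist_comm _ _
  linarith

private lemma upper_of_min {A B R d : ℝ} (h : min A B - d ≤ R) (hB : R + d < B) :
    A ≤ R + d := by
  rcases le_total A B with h' | h'
  · rw [min_eq_left h'] at h; linarith
  · rw [min_eq_right h'] at h; linarith

private lemma tendsto_pp {f : ℕ × ℕ → ℝ} :
    Tendsto f atTop atTop ↔ ∀ b : ℝ, ∃ N : ℕ, ∀ n, N ≤ n → ∀ m, N ≤ m → b ≤ f (n, m) := by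
  rw [tendsto_atTop]
  constructor
  · intro h b
    obtain ⟨a, ha⟩ := eventually_atTop.1 (h b)
    refine ⟨max a.1 a.2, fun n hn m hm => ha (n, m) ?_⟩
    exact Prod.le_def.2 ⟨le_trans (le_max_left _ _) hn, le_trans (le_max_right _ _) hm⟩
  · intro h b
    obtain ⟨N, hN⟩ := h b
    rw [eventually_atTop]
    exact ⟨(N, N), fun p hp => hN p.1 (Prod.le_def.1 hp).1 p.2 (Prod.le_def.1 hp).2⟩

private lemma gp_smul_eq {X H : Type*} [MetricSpace X] [Group H] [MulAction H X]
    (hiso : ∀ (g : H) (x y : X), dist (g • x) (g • y) = dist x y)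
    (g : H) (z x y : X) :
    gromovProd (g • z) (g • x) (g • y) = gromovProd z x y := by
  rw [gp_expand, gp_expand, hiso, hiso, hiso]

private lemma gp_smul_ge {X H : Type*} [MetricSpace X] [Group H] [MulAction H X]
    (hiso : ∀ (g : H) (x y : X), dist (g • x) (g • y) = dist x y)
    (w : X) (g : H) (x y : X) :
    gromovProd w x y - dist w (g • w) ≤ gromovProd w (g • x) (g • y) := by
  have h1 : dist w x - dist w (g • w) ≤ dist w (g • x) := by
    have h2 : dist (g • w) (g • x) = dist w x := hiso g w x
    have h3 : dist (g • w) (g • x) ≤ dist (g • w) w + dist w (g • x) := dist_triangle _ _ _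
    rw [h2, dist_comm (g • w) w] at h3
    linarith
  have h1' : dist w y - dist w (g • w) ≤ dist w (g • y) := by
    have h2 : dist (g • w) (g • y) = dist w y := hiso g w y
    have h3 : dist (g • w) (g • y) ≤ dist (g • w) w + dist w (g • y) := dist_triangle _ _ _
    rw [h2, dist_comm (g • w) w] at h3
    linarith
  have h4 : dist (g • x) (g • y) = dist x y := hiso g x y
  rw [gp_expand, gp_expand, h4]
  linarith

private lemma dist_inv_smul {X H : Type*} [MetricSpace X] [Group H] [MulAction H X]
    (hiso : ∀ (g : H) (x y : X), dist (g • x) (g • y) = dist x y)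
    (w : X) (g : H) : dist w (g⁻¹ • w) = dist w (g • w) := by
  have h := hiso g w (g⁻¹ • w)
  rw [smul_inv_smul] at h
  rw [← h, dist_comm]
private lemma caseII_products {X H : Type*} [MetricSpace X] [Group H] [MulAction H X]
    (δ : ℝ) (hδ : IsGromovHyperbolic X δ) (hδ0 : 0 ≤ δ)
    (hiso : ∀ (g : H) (x y : X), dist (g • x) (g • y) = dist x y)
    (w : X) (S : Subgroup H)
    (hQ : ∀ a ∈ S, dist w (a • w) / 2 - (3*δ+1)/2 ≤ gromovProd w (a • w) (a⁻¹ • w)) :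
    ∀ g ∈ S, ∀ h ∈ S,
      min (dist w (g • w)) (dist w (h • w)) / 2 - ((3*δ+1)/2 + 2*δ + 1)
        ≤ gromovProd w (g • w) (h • w) := by
  intro g hg h hh
  by_contra hcon
  push_neg at hcon
  have hm1 : min (dist w (g • w)) (dist w (h • w)) ≤ dist w (g • w) := min_le_left _ _
  have hm2 : min (dist w (g • w)) (dist w (h • w)) ≤ dist w (h • w) := min_le_right _ _
  have hp0 : 0 ≤ gromovProd w (g • w) (h • w) := gp_nonneg _ _ _
  have qg := hQ g hg
  have qh := hQ h hh
  have qgh := hQ (g*h) (mul_mem hg hh)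
  have hgig : dist w (g⁻¹ • w) = dist w (g • w) := dist_inv_smul hiso w g
  have hhih : dist w (h⁻¹ • w) = dist w (h • w) := dist_inv_smul hiso w h
  have hghi : dist w ((g*h)⁻¹ • w) = dist w ((g*h) • w) := dist_inv_smul hiso w (g*h)
  -- distance identities
  have e5 : dist (g⁻¹ • w) (h • w) = dist w ((g*h) • w) := by
    have h1 := hiso g (g⁻¹ • w) (h • w)
    rw [smul_inv_smul, ← mul_smul] at h1
    exact h1.symm
  have e6 : dist ((g*h) • w) (g • w) = dist w (h • w) := by
    have h1 := hiso g (h • w) w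
    rw [← mul_smul] at h1
    exact h1.trans (dist_comm _ _)
  have e9 : dist ((g*h)⁻¹ • w) (h⁻¹ • w) = dist w (g • w) := by
    have h1 := hiso h ((g*h)⁻¹ • w) (h⁻¹ • w)
    rw [smul_inv_smul, ← mul_smul] at h1
    have e : h * (g*h)⁻¹ = g⁻¹ := by group
    rw [e] at h1
    rw [← h1, dist_comm, hgig]
  -- Gromov product expansions
  have f5 : gromovProd w (g⁻¹ • w) (h • w)
      = (dist w (g • w) + dist w (h • w) - dist w ((g*h) • w)) / 2 := by
    rw [gp_expand, hgig, e5]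
  have f6 : gromovProd w ((g*h) • w) (g • w)
      = (dist w ((g*h) • w) + dist w (g • w) - dist w (h • w)) / 2 := by
    rw [gp_expand, e6]
  have f9 : gromovProd w ((g*h)⁻¹ • w) (h⁻¹ • w)
      = (dist w ((g*h) • w) + dist w (h • w) - dist w (g • w)) / 2 := by
    rw [gp_expand, hghi, hhih, e9]
  -- step 3 : (h | g⁻¹) ≤ p + δ
  have qg' : dist w (g • w) / 2 - (3*δ+1)/2 ≤ gromovProd w (g⁻¹ • w) (g • w) := by
    rw [gp_comm]; exact qg
  have s3 : gromovProd w (h • w) (g⁻¹ • w) ≤ gromovProd w (g • w) (h • w) + δ := by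
    have hyp := hδ w (h • w) (g⁻¹ • w) (g • w)
    rw [gp_comm w (h • w) (g • w)] at hyp
    exact upper_of_min hyp (by linarith)
  have s3' : gromovProd w (g⁻¹ • w) (h • w) ≤ gromovProd w (g • w) (h • w) + δ := by
    rw [gp_comm]; exact s3
  -- step 5 : lower bound on |gh|
  have hgh : dist w (g • w) + dist w (h • w) - 2 * gromovProd w (g • w) (h • w) - 2*δ
      ≤ dist w ((g*h) • w) := by
    rw [f5] at s3'; linarith
  -- step 7 : (gh | h) ≤ p + δ
  have s7 : gromovProd w (h • w) ((g*h) • w) ≤ gromovProd w (g • w) (h • w) + δ := by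
    have hyp := hδ w (h • w) ((g*h) • w) (g • w)
    rw [gp_comm w (h • w) (g • w)] at hyp
    refine upper_of_min hyp ?_
    rw [f6]
    linarith
  have s7' : gromovProd w ((g*h) • w) (h • w) ≤ gromovProd w (g • w) (h • w) + δ := by
    rw [gp_comm]; exact s7
  -- step 8 : (gh | h⁻¹) ≤ p + 2δ
  have qh' : dist w (h • w) / 2 - (3*δ+1)/2 ≤ gromovProd w (h⁻¹ • w) (h • w) := by
    rw [gp_comm]; exact qh
  have s8 : gromovProd w ((g*h) • w) (h⁻¹ • w)
      ≤ gromovProd w (g • w) (h • w) + 2*δ := by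
    have hyp := hδ w ((g*h) • w) (h⁻¹ • w) (h • w)
    have := upper_of_min hyp (by linarith)
    linarith
  -- step 10 : (gh | (gh)⁻¹) ≤ p + 3δ
  have s10 : gromovProd w ((g*h) • w) ((g*h)⁻¹ • w)
      ≤ gromovProd w (g • w) (h • w) + 3*δ := by
    have hyp := hδ w ((g*h) • w) ((g*h)⁻¹ • w) (h⁻¹ • w)
    have hBig : gromovProd w ((g*h) • w) (h⁻¹ • w) + δ
        < gromovProd w ((g*h)⁻¹ • w) (h⁻¹ • w) := by
      rw [f9]; linarith
    have := upper_of_min hyp hBig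
    linarith
  -- step 11 : contradiction with hQ (g*h)
  linarith [qgh, s10, hgh, hcon, hm1, hm2, hδ0]
private lemma caseI_conv {X H : Type*} [MetricSpace X] [Group H] [MulAction H X]
    (δ : ℝ) (hδ : IsGromovHyperbolic X δ) (hδ0 : 0 ≤ δ)
    (hiso : ∀ (g : H) (x y : X), dist (g • x) (g • y) = dist x y)
    (w : X) (a : H)
    (hK : gromovProd w (a • w) (a⁻¹ • w) < dist w (a • w) / 2 - (3*δ+1)/2) :
    ConvergesAtInfinity w (fun n => a ^ n • w) := by
  have hK0 : 0 ≤ gromovProd w (a • w) (a⁻¹ • w) := gp_nonneg _ _ _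
  have F1 : ∀ n : ℕ, dist (a ^ n • w) (a ^ (n+1) • w) = dist w (a • w) := by
    intro n
    rw [pow_succ, mul_smul, hiso]
  have F2 : ∀ n : ℕ, gromovProd (a ^ (n+1) • w) (a ^ n • w) (a ^ (n+2) • w)
      = gromovProd w (a • w) (a⁻¹ • w) := by
    intro n
    have key := gp_smul_eq hiso (a ^ (n+1)) w (a⁻¹ • w) (a • w)
    have e1 : a ^ (n+1) • a⁻¹ • w = a ^ n • w := by
      rw [← mul_smul, pow_succ, mul_inv_cancel_right]
    have e2 : a ^ (n+1) • a • w = a ^ (n+2) • w := by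
      rw [← mul_smul, ← pow_succ]
    rw [e1, e2] at key
    rw [key, gp_comm]
  have main : ∀ n : ℕ,
      gromovProd (a ^ n • w) w (a ^ (n+1) • w) ≤ gromovProd w (a • w) (a⁻¹ • w) + δ ∧
      dist w (a • w) - gromovProd w (a • w) (a⁻¹ • w) - δ
        ≤ gromovProd (a ^ (n+1) • w) w (a ^ n • w) := by
    intro n
    induction n with
    | zero =>
      have e0 : a ^ 0 • w = w := by rw [pow_zero, one_smul]
      constructor
      · rw [e0, gp_expand w w (a ^ (0+1) • w), dist_self]
        linarith
      · rw [e0, gp_expand (a ^ (0+1) • w) w w, dist_self]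
        have e1 : dist (a ^ (0+1) • w) w = dist w (a • w) := by
          rw [dist_comm]
          have h2 := F1 0
          rw [e0] at h2
          exact h2
        rw [e1]
        linarith
    | succ n ih =>
      obtain ⟨ihT, ihP⟩ := ih
      have hyp := hδ (a ^ (n+1) • w) (a ^ (n+2) • w) w (a ^ n • w)
      have hF2 : gromovProd (a ^ (n+1) • w) (a ^ (n+2) • w) (a ^ n • w)
          = gromovProd w (a • w) (a⁻¹ • w) := by
        rw [gp_comm]; exact F2 n
      rw [hF2] at hyp
      have hT : gromovProd (a ^ (n+1) • w) (a ^ (n+2) • w) w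
          ≤ gromovProd w (a • w) (a⁻¹ • w) + δ :=
        upper_of_min hyp (by linarith)
      have hT' : gromovProd (a ^ (n+1) • w) w (a ^ (n+2) • w)
          ≤ gromovProd w (a • w) (a⁻¹ • w) + δ := by
        rw [gp_comm]; exact hT
      refine ⟨hT', ?_⟩
      have d1 := F1 (n+1)
      have c1 : dist (a ^ (n+1) • w) w = dist w (a ^ (n+1) • w) := dist_comm _ _
      have c2 : dist (a ^ (n+2) • w) w = dist w (a ^ (n+2) • w) := dist_comm _ _
      have c3 : dist (a ^ (n+2) • w) (a ^ (n+1) • w)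
          = dist (a ^ (n+1) • w) (a ^ (n+2) • w) := dist_comm _ _
      rw [gp_expand (a ^ (n+1) • w) w (a ^ (n+2) • w)] at hT'
      rw [gp_expand (a ^ (n+2) • w) w (a ^ (n+1) • w)]
      linarith
  have dgrow : ∀ n : ℕ, dist w (a ^ n • w)
      + (dist w (a • w) - 2 * gromovProd w (a • w) (a⁻¹ • w) - 2*δ)
      ≤ dist w (a ^ (n+1) • w) := by
    intro n
    have hT := (main n).1
    rw [gp_expand (a ^ n • w) w (a ^ (n+1) • w)] at hT
    have c1 : dist (a ^ n • w) w = dist w (a ^ n • w) := dist_comm _ _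
    linarith [F1 n]
  have dlow : ∀ n : ℕ, (n : ℝ) * (dist w (a • w) - 2 * gromovProd w (a • w) (a⁻¹ • w) - 2*δ)
      ≤ dist w (a ^ n • w) := by
    intro n
    induction n with
    | zero => simp [pow_zero, one_smul, dist_self]
    | succ n ih =>
      have h1 := dgrow n
      push_cast
      push_cast at ih
      nlinarith [hK, hδ0]
  have cons : ∀ n : ℕ, dist w (a ^ n • w) - gromovProd w (a • w) (a⁻¹ • w) - δ
      ≤ gromovProd w (a ^ n • w) (a ^ (n+1) • w) := by
    intro n
    have hT := (main n).1
    rw [gp_expand (a ^ n • w) w (a ^ (n+1) • w)] at hT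
    rw [gp_expand w (a ^ n • w) (a ^ (n+1) • w)]
    have c1 : dist (a ^ n • w) w = dist w (a ^ n • w) := dist_comm _ _
    linarith [F1 n]
  have Hcl : ∀ k : ℕ, ∀ m : ℕ,
      dist w (a ^ m • w) - gromovProd w (a • w) (a⁻¹ • w) - 2*δ
        ≤ gromovProd w (a ^ m • w) (a ^ (m + k + 1) • w) := by
    intro k
    induction k with
    | zero =>
      intro m
      have h1 := cons m
      simp only [Nat.add_zero]
      linarith
    | succ k ih =>
      intro m
      have hyp := hδ w (a ^ m • w) (a ^ (m+1) • w) (a ^ (m + (k+1) + 1) • w)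
      have ih' := ih (m+1)
      have e : m + 1 + k + 1 = m + (k+1) + 1 := by omega
      rw [e] at ih'
      have h1 := cons m
      have h2 := dgrow m
      have hmin : dist w (a ^ m • w) - gromovProd w (a • w) (a⁻¹ • w) - δ
          ≤ min (gromovProd w (a ^ m • w) (a ^ (m+1) • w))
              (gromovProd w (a ^ (m+1) • w) (a ^ (m + (k+1) + 1) • w)) :=
        le_min (by linarith) (by linarith)
      linarith
  unfold ConvergesAtInfinity
  rw [tendsto_pp]
  intro b
  obtain ⟨N, hN⟩ := exists_nat_ge (b + gromovProd w (a • w) (a⁻¹ • w) + 2*δ)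
  refine ⟨N, fun n hn m hm => ?_⟩
  show b ≤ gromovProd w (a ^ n • w) (a ^ m • w)
  have hσ1 : 1 ≤ dist w (a • w) - 2 * gromovProd w (a • w) (a⁻¹ • w) - 2*δ := by
    linarith
  have lowcast : ∀ j : ℕ, (j : ℝ) ≤ dist w (a ^ j • w) := by
    intro j
    have h1 := dlow j
    nlinarith [Nat.cast_nonneg (α := ℝ) j]
  rcases lt_trichotomy n m with hlt | heq | hgt
  · obtain ⟨k, rfl⟩ : ∃ k, m = n + k + 1 := ⟨m - n - 1, by omega⟩
    have h1 := Hcl k n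
    have h2 := lowcast n
    have hn' : (N : ℝ) ≤ (n : ℝ) := Nat.cast_le.2 hn
    linarith
  · subst heq
    rw [gp_self]
    have h2 := lowcast n
    have hn' : (N : ℝ) ≤ (n : ℝ) := Nat.cast_le.2 hn
    linarith
  · obtain ⟨k, rfl⟩ : ∃ k, n = m + k + 1 := ⟨n - m - 1, by omega⟩
    have h1 := Hcl k m
    have h2 := lowcast m
    have hm' : (N : ℝ) ≤ (m : ℝ) := Nat.cast_le.2 hm
    rw [gp_comm]
    linarith
private lemma main_lemma {X H : Type*} [MetricSpace X] [Group H] [MulAction H X]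
    (δ : ℝ) (hδ : IsGromovHyperbolic X δ) (hδ0 : 0 ≤ δ)
    (hiso : ∀ (g : H) (x y : X), dist (g • x) (g • y) = dist x y)
    (w : X) (S : Subgroup H)
    (hU : ∀ r : ℝ, ∃ a ∈ S, r < dist w (a • w)) :
    ∃ u : ℕ → H, (∀ n, u n ∈ S) ∧ ConvergesAtInfinity w (fun n => u n • w) := by
  by_cases hQ : ∀ a ∈ S, dist w (a • w) / 2 - (3*δ+1)/2 ≤ gromovProd w (a • w) (a⁻¹ • w)
  · have key := caseII_products δ hδ hδ0 hiso w S hQ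
    choose u hu1 hu2 using fun n : ℕ => hU (2*(n:ℝ) + 2*((3*δ+1)/2 + 2*δ + 1))
    refine ⟨u, hu1, ?_⟩
    unfold ConvergesAtInfinity
    rw [tendsto_pp]
    intro b
    obtain ⟨N, hN⟩ := exists_nat_ge b
    refine ⟨N, fun n hn m hm => ?_⟩
    show b ≤ gromovProd w (u n • w) (u m • w)
    have k1 := key (u n) (hu1 n) (u m) (hu1 m)
    have h2n := hu2 n
    have h2m := hu2 m
    rcases le_total (dist w (u n • w)) (dist w (u m • w)) with hc | hc
    · rw [min_eq_left hc] at k1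
      have hn' : (N:ℝ) ≤ (n:ℝ) := Nat.cast_le.2 hn
      linarith
    · rw [min_eq_right hc] at k1
      have hm' : (N:ℝ) ≤ (m:ℝ) := Nat.cast_le.2 hm
      linarith
  · push_neg at hQ
    obtain ⟨a, haS, hK⟩ := hQ
    exact ⟨fun n => a ^ n, fun n => pow_mem haS n, caseI_conv δ hδ hδ0 hiso w a hK⟩

private lemma bequiv_refl' {X : Type*} [MetricSpace X] {w : X} (s : BoundarySeq X w) :
    bequiv w s s := s.2

private lemma bequiv_symm' {X : Type*} [MetricSpace X] {w : X} {s t : BoundarySeq X w}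
    (h : bequiv w s t) : bequiv w t s := by
  unfold bequiv at h ⊢
  rw [tendsto_pp] at h ⊢
  intro b
  obtain ⟨N, hN⟩ := h b
  exact ⟨N, fun n hn m hm => by rw [gp_comm]; exact hN m hm n hn⟩

private lemma bequiv_trans' {X : Type*} [MetricSpace X] (δ : ℝ)
    (hδ : IsGromovHyperbolic X δ) {w : X} {s t u : BoundarySeq X w}
    (h1 : bequiv w s t) (h2 : bequiv w t u) : bequiv w s u := by
  unfold bequiv at h1 h2 ⊢
  rw [tendsto_pp] at h1 h2 ⊢
  intro b
  obtain ⟨N1, hN1⟩ := h1 (b + δ)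
  obtain ⟨N2, hN2⟩ := h2 (b + δ)
  refine ⟨max N1 N2, fun n hn m hm => ?_⟩
  have hyp := hδ w (s.1 n) (t.1 (max N1 N2)) (u.1 m)
  have a1 := hN1 n (le_trans (le_max_left _ _) hn) (max N1 N2) (le_max_left _ _)
  have a2 := hN2 (max N1 N2) (le_max_right _ _) m (le_trans (le_max_right _ _) hm)
  have := le_min a1 a2
  linarith

private lemma bequiv_smul' {X H : Type*} [MetricSpace X] [Group H] [MulAction H X]
    (hiso : ∀ (g : H) (x y : X), dist (g • x) (g • y) = dist x y)
    {w : X} (g : H) (s t : BoundarySeq X w) (R : ℝ)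
    (hdisp : ∀ m, dist (t.1 m) (g • t.1 m) ≤ R)
    (hb : bequiv w s t) : bequiv w (smulSeq w hiso g s) t := by
  unfold bequiv at hb ⊢
  have key : ∀ p : ℕ × ℕ,
      gromovProd w (s.1 p.1) (t.1 p.2) - dist w (g • w) - R
        ≤ gromovProd w (g • s.1 p.1) (t.1 p.2) := by
    intro p
    have l2 := gp_smul_ge hiso w g (s.1 p.1) (t.1 p.2)
    have l1 := gp_move w (g • s.1 p.1) (g • t.1 p.2) (t.1 p.2)
    have hd : dist (g • t.1 p.2) (t.1 p.2) = dist (t.1 p.2) (g • t.1 p.2) := dist_comm _ _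
    have := hdisp p.2
    linarith
  have h5 : Tendsto
      (fun p : ℕ × ℕ => gromovProd w (s.1 p.1) (t.1 p.2) - dist w (g • w) - R)
      atTop atTop := by
    have := tendsto_atTop_add_const_right atTop (-(dist w (g • w)) - R) hb
    simpa [sub_eq_add_neg, add_assoc] using this
  exact tendsto_atTop_mono key h5
/-- Lemma 4.2 of the paper.  If a group `H` acts isometrically with unbounded
orbits on a Gromov hyperbolic space `X` and contains two normal subgroups `K₁`
and `K₂` that centralize each other, then `K₁` or `K₂` has a finite orbit in
the Gromov boundary `∂∞X`. -/
theorem finite_boundary_orbit_of_commuting_normals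
    {X H : Type*} [MetricSpace X] [Group H] [MulAction H X]
    (δ : ℝ) (hδ : IsGromovHyperbolic X δ)
    (hiso : ∀ (g : H) (x y : X), dist (g • x) (g • y) = dist x y)
    (w : X)
    (hunbounded : ¬ Bornology.IsBounded (Set.range fun g : H => g • w))
    (K₁ K₂ : Subgroup H) (h₁ : K₁.Normal) (h₂ : K₂.Normal)
    (hcomm : ∀ a ∈ K₁, ∀ b ∈ K₂, a * b = b * a) :
    ∃ i : Fin 2, ∃ S : Set (GromovBoundary X w), S.Finite ∧ S.Nonempty ∧
      ∀ g ∈ (if i = 0 then K₁ else K₂), ∀ s : BoundarySeq X w,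
        Quot.mk (bequiv w) s ∈ S → Quot.mk (bequiv w) (smulSeq w hiso g s) ∈ S := by
  have hδ0 : 0 ≤ δ := by
    have h := hδ w w w w
    rw [gp_self, dist_self, min_self] at h
    linarith
  have hequiv : Equivalence (bequiv (X := X) w) :=
    ⟨bequiv_refl', fun h => bequiv_symm' h, fun h1 h2 => bequiv_trans' δ hδ h1 h2⟩
  by_cases hK1 : ∀ r : ℝ, ∃ a ∈ K₁, r < dist w (a • w)
  · -- K₁ has unbounded orbit: every element of K₂ fixes a limit point of K₁
    obtain ⟨u, huS, hconv⟩ := main_lemma δ hδ hδ0 hiso w K₁ hK1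
    refine ⟨1, {Quot.mk (bequiv w) ⟨fun n => u n • w, hconv⟩},
      Set.finite_singleton _, Set.singleton_nonempty _, ?_⟩
    intro g hg s' hs'
    rw [if_neg (by decide : ¬(1 : Fin 2) = 0)] at hg
    change (Quot.mk (bequiv w) s' : GromovBoundary X w) = Quot.mk (bequiv w) ⟨fun n => u n • w, hconv⟩ at hs'
    change (Quot.mk (bequiv w) (smulSeq w hiso g s') : GromovBoundary X w) = Quot.mk (bequiv w) ⟨fun n => u n • w, hconv⟩
    have hb : bequiv w s' ⟨fun n => u n • w, hconv⟩ :=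
      (hequiv.eqvGen_iff).1 (Quot.eqvGen_exact hs')
    have hdisp : ∀ m, dist (u m • w) (g • (u m • w)) ≤ dist w (g • w) := by
      intro m
      have hcg : g • (u m • w) = u m • (g • w) := by
        rw [← mul_smul, ← mul_smul, hcomm (u m) (huS m) g hg]
      have : dist (u m • w) (g • (u m • w)) = dist w (g • w) := by
        rw [hcg, hiso]
      exact le_of_eq this
    exact Quot.sound (bequiv_smul' hiso g s' _ _ hdisp hb)
  · -- K₁ has bounded orbit: it fixes a limit point of H
    push_neg at hK1
    obtain ⟨R, hR⟩ := hK1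
    have hH : ∀ r : ℝ, ∃ a ∈ (⊤ : Subgroup H), r < dist w (a • w) := by
      intro r
      by_contra hcon
      push_neg at hcon
      apply hunbounded
      have hsub : (Set.range fun g : H => g • w) ⊆ Metric.closedBall w r := by
        rintro x ⟨g, rfl⟩
        simp only [Metric.mem_closedBall]
        rw [dist_comm]
        exact hcon g (Subgroup.mem_top g)
      exact (Metric.isBounded_closedBall).subset hsub
    obtain ⟨u, huS, hconv⟩ := main_lemma δ hδ hδ0 hiso w ⊤ hH
    refine ⟨0, {Quot.mk (bequiv w) ⟨fun n => u n • w, hconv⟩},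
      Set.finite_singleton _, Set.singleton_nonempty _, ?_⟩
    intro g hg s' hs'
    rw [if_pos rfl] at hg
    change (Quot.mk (bequiv w) s' : GromovBoundary X w) = Quot.mk (bequiv w) ⟨fun n => u n • w, hconv⟩ at hs'
    change (Quot.mk (bequiv w) (smulSeq w hiso g s') : GromovBoundary X w) = Quot.mk (bequiv w) ⟨fun n => u n • w, hconv⟩
    have hb : bequiv w s' ⟨fun n => u n • w, hconv⟩ :=
      (hequiv.eqvGen_iff).1 (Quot.eqvGen_exact hs')
    have hdisp : ∀ m, dist (u m • w) (g • (u m • w)) ≤ R := by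
      intro m
      have hconj : (u m)⁻¹ * g * (u m) ∈ K₁ := by
        have := h₁.conj_mem g hg (u m)⁻¹
        rwa [inv_inv] at this
      have e : g • (u m • w) = u m • ((((u m)⁻¹ * g * u m)) • w) := by
        rw [← mul_smul, ← mul_smul]
        congr 1
        group
      rw [e, hiso]
      exact hR _ hconj
    exact Quot.sound (bequiv_smul' hiso g s' _ _ hdisp hb)
end

section
/- Let D = {x₁⁺, x₁⁻, ..., x_N⁺, x_N⁻} be the set of 2N directions at the vertex of an N-petal rose. Let 𝒫 = {P₁, P₂} and 𝒬 = {Q₁, Q₂} be two ideal edges (partitions of D into two parts, each separating some pair {x_i⁺, x_i⁻}) that are compatible, with sides indexed so that P₁ and Q₁ are disjoint. Then 𝒫 and 𝒬 are rose compatible if and only if P₁ ∪ Q₁ separates some pair {x_i⁺, x_i⁻}. -/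
/-- The direction `(i, true)` stands for `xᵢ⁺` and `(i, false)` for `xᵢ⁻` among the
`2N` directions at the vertex of an `N`-petal rose. -/
abbrev RoseDir (N : ℕ) := Fin N × Bool

/-- `S` separates the pair `{xᵢ⁺, xᵢ⁻}` if exactly one of the two lies in `S`. -/
def Separates {N : ℕ} (S : Finset (RoseDir N)) (i : Fin N) : Prop :=
  Xor' ((i, true) ∈ S) ((i, false) ∈ S)

/-- The partition `{S, Sᶜ}` is an ideal edge if it separates some pair `{xᵢ⁺, xᵢ⁻}`. -/
def IsIdealEdge {N : ℕ} (S : Finset (RoseDir N)) : Prop :=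
  ∃ i : Fin N, Separates S i

/-- Position of a half-edge in the two-edge line blow-up determined by the compatible
ideal edges with chosen disjoint sides `P₁` and `Q₁`: half-edges in `P₁` attach at the
endpoint `0`, those in `Q₁` at the endpoint `2`, the remaining ones at the center `1`. -/
def posMap {N : ℕ} (P₁ Q₁ : Finset (RoseDir N)) (d : RoseDir N) : Fin 3 :=
  if d ∈ P₁ then 0 else if d ∈ Q₁ then 2 else 1

/-- Compatible ideal edges `{P₁, P₁ᶜ}` and `{Q₁, Q₁ᶜ}` (sides indexed with `P₁` and `Q₁`
disjoint) are rose compatible if collapsing the petals of the joint blow-up identifies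
the three vertices of the two-edge line, i.e. the quotient graph is a two-petal rose. -/
def RoseCompatible {N : ℕ} (P₁ Q₁ : Finset (RoseDir N)) : Prop :=
  ∀ a b : Fin 3,
    Relation.EqvGen (fun a b =>
      ∃ i : Fin N, (posMap P₁ Q₁ (i, true) = a ∧ posMap P₁ Q₁ (i, false) = b) ∨
        (posMap P₁ Q₁ (i, false) = a ∧ posMap P₁ Q₁ (i, true) = b)) a b

/-- Lemma 3.8 of the paper: two compatible ideal edges of an `N`-rose, with sides
chosen so that `P₁` and `Q₁` are disjoint, are rose compatible if and only if
`P₁ ∪ Q₁` separates some pair `{xᵢ⁺, xᵢ⁻}`. -/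
theorem roseCompatible_iff {N : ℕ} (P₁ Q₁ : Finset (RoseDir N))
    (hP : IsIdealEdge P₁) (hQ : IsIdealEdge Q₁) (hdisj : Disjoint P₁ Q₁) :
    RoseCompatible P₁ Q₁ ↔ ∃ i : Fin N, Separates (P₁ ∪ Q₁) i := by
  have hdis : ∀ d : RoseDir N, d ∈ P₁ → d ∉ Q₁ := fun d hd => Finset.disjoint_left.mp hdisj hd
  have hpos1 : ∀ d : RoseDir N, posMap P₁ Q₁ d = 1 ↔ (d ∉ P₁ ∧ d ∉ Q₁) := by
    intro d; unfold posMap; split_ifs with h h' <;> simp_all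
  have hpos0 : ∀ d : RoseDir N, posMap P₁ Q₁ d = 0 ↔ d ∈ P₁ := by
    intro d; unfold posMap; split_ifs with h h' <;> simp_all
  have hpos2 : ∀ d : RoseDir N, posMap P₁ Q₁ d = 2 ↔ (d ∉ P₁ ∧ d ∈ Q₁) := by
    intro d; unfold posMap; split_ifs with h h' <;> simp_all
  set R : Fin 3 → Fin 3 → Prop := fun a b =>
      ∃ i : Fin N, (posMap P₁ Q₁ (i, true) = a ∧ posMap P₁ Q₁ (i, false) = b) ∨
        (posMap P₁ Q₁ (i, false) = a ∧ posMap P₁ Q₁ (i, true) = b) with hRdef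
  constructor
  · intro h
    by_contra hsep
    push_neg at hsep
    have key : ∀ a b : Fin 3, Relation.EqvGen R a b → (a = 1 ↔ b = 1) := by
      intro a b hab
      induction hab with
      | rel a b hab =>
        obtain ⟨i, hi⟩ := hab
        have hns := hsep i
        have hmem : ((i, true) ∈ P₁ ∨ (i, true) ∈ Q₁) ↔ ((i, false) ∈ P₁ ∨ (i, false) ∈ Q₁) := by
          unfold Separates Xor' Xor at hns
          simp only [Finset.mem_union] at hns
          tauto
        have hiff : posMap P₁ Q₁ (i, true) = 1 ↔ posMap P₁ Q₁ (i, false) = 1 := by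
          rw [hpos1, hpos1]
          tauto
        rcases hi with ⟨ha, hb⟩ | ⟨ha, hb⟩
        · rw [← ha, ← hb]; exact hiff
        · rw [← ha, ← hb]; exact hiff.symm
      | refl a => rfl
      | symm a b _ ih => exact ih.symm
      | trans a b c _ _ ih1 ih2 => exact ih1.trans ih2
    have := (key 0 1 (h 0 1)).mpr rfl
    exact absurd this (by decide)
  · rintro ⟨i, hi⟩
    -- edge from separating pair: connects 1 to 0 or to 2
    have edge : ∀ a b : Fin 3, ∀ j : Fin N,
        (posMap P₁ Q₁ (j, true) = a ∧ posMap P₁ Q₁ (j, false) = b) ∨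
        (posMap P₁ Q₁ (j, false) = a ∧ posMap P₁ Q₁ (j, true) = b) →
        Relation.EqvGen R a b := fun a b j hj => Relation.EqvGen.rel a b ⟨j, hj⟩
    have h1 : Relation.EqvGen R 0 1 ∨ Relation.EqvGen R 1 2 := by
      unfold Separates at hi
      rcases hi with ⟨hin, hout⟩ | ⟨hin, hout⟩
      · -- (i,true) ∈ union, (i,false) ∉ union
        simp only [Finset.mem_union] at hin hout
        push_neg at hout
        have hb : posMap P₁ Q₁ (i, false) = 1 := (hpos1 _).mpr hout
        rcases hin with hp | hq
        · exact Or.inl (edge 0 1 i (Or.inl ⟨(hpos0 _).mpr hp, hb⟩))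
        · rcases Decidable.em ((i, true) ∈ P₁) with hp | hp
          · exact Or.inl (edge 0 1 i (Or.inl ⟨(hpos0 _).mpr hp, hb⟩))
          · exact Or.inr (edge 1 2 i (Or.inr ⟨hb, (hpos2 _).mpr ⟨hp, hq⟩⟩))
      · simp only [Finset.mem_union] at hin hout
        push_neg at hout
        have hb : posMap P₁ Q₁ (i, true) = 1 := (hpos1 _).mpr hout
        rcases hin with hp | hq
        · exact Or.inl (edge 0 1 i (Or.inr ⟨(hpos0 _).mpr hp, hb⟩))
        · rcases Decidable.em ((i, false) ∈ P₁) with hp | hp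
          · exact Or.inl (edge 0 1 i (Or.inr ⟨(hpos0 _).mpr hp, hb⟩))
          · exact Or.inr (edge 1 2 i (Or.inl ⟨hb, (hpos2 _).mpr ⟨hp, hq⟩⟩))
    have hPe : Relation.EqvGen R 0 1 ∨ Relation.EqvGen R 0 2 := by
      obtain ⟨j, hj⟩ := hP
      unfold Separates at hj
      rcases hj with ⟨hin, hout⟩ | ⟨hin, hout⟩
      · have ha : posMap P₁ Q₁ (j, true) = 0 := (hpos0 _).mpr hin
        rcases Decidable.em ((j, false) ∈ Q₁) with hq | hq
        · exact Or.inr (edge 0 2 j (Or.inl ⟨ha, (hpos2 _).mpr ⟨hout, hq⟩⟩))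
        · exact Or.inl (edge 0 1 j (Or.inl ⟨ha, (hpos1 _).mpr ⟨hout, hq⟩⟩))
      · have ha : posMap P₁ Q₁ (j, false) = 0 := (hpos0 _).mpr hin
        rcases Decidable.em ((j, true) ∈ Q₁) with hq | hq
        · exact Or.inr (edge 0 2 j (Or.inr ⟨ha, (hpos2 _).mpr ⟨hout, hq⟩⟩))
        · exact Or.inl (edge 0 1 j (Or.inr ⟨ha, (hpos1 _).mpr ⟨hout, hq⟩⟩))
    have hQe : Relation.EqvGen R 1 2 ∨ Relation.EqvGen R 0 2 := by
      obtain ⟨j, hj⟩ := hQ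
      unfold Separates at hj
      rcases hj with ⟨hin, hout⟩ | ⟨hin, hout⟩
      · have hnp : (j, true) ∉ P₁ := fun hp => hdis _ hp hin
        have ha : posMap P₁ Q₁ (j, true) = 2 := (hpos2 _).mpr ⟨hnp, hin⟩
        rcases Decidable.em ((j, false) ∈ P₁) with hp | hp
        · exact Or.inr (edge 0 2 j (Or.inr ⟨(hpos0 _).mpr hp, ha⟩))
        · exact Or.inl (edge 1 2 j (Or.inr ⟨(hpos1 _).mpr ⟨hp, hout⟩, ha⟩))
      · have hnp : (j, false) ∉ P₁ := fun hp => hdis _ hp hin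
        have ha : posMap P₁ Q₁ (j, false) = 2 := (hpos2 _).mpr ⟨hnp, hin⟩
        rcases Decidable.em ((j, true) ∈ P₁) with hp | hp
        · exact Or.inr (edge 0 2 j (Or.inl ⟨(hpos0 _).mpr hp, ha⟩))
        · exact Or.inl (edge 1 2 j (Or.inl ⟨(hpos1 _).mpr ⟨hp, hout⟩, ha⟩))
    have g0 : Relation.EqvGen R 1 0 := by
      rcases h1 with e | e
      · exact Relation.EqvGen.symm _ _ e
      · rcases hPe with e' | e'
        · exact Relation.EqvGen.symm _ _ e'
        · exact Relation.EqvGen.trans _ _ _ e (Relation.EqvGen.symm _ _ e')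
    have g2 : Relation.EqvGen R 1 2 := by
      rcases h1 with e | e
      · rcases hQe with e' | e'
        · exact e'
        · exact Relation.EqvGen.trans _ _ _ (Relation.EqvGen.symm _ _ e) e'
      · exact e
    have f : ∀ x : Fin 3, Relation.EqvGen R 1 x := by
      intro x
      fin_cases x
      · exact g0
      · exact Relation.EqvGen.refl _
      · exact g2
    intro a b
    exact Relation.EqvGen.trans _ _ _ (Relation.EqvGen.symm _ _ (f a)) (f b)
end

section
/- Let G be a group, H ⊆ G a subgroup, and suppose there is a normal subgroup G₀ ⊴ G such that H₀ := H ∩ G₀ has finite index in both G₀ and H. Suppose every injective homomorphism f : H → H is of the form conjugation by some element g ∈ G (restricted to H). Then H is co-Hopfian: every injective homomorphism H → H is an automorphism of H. -/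
open Pointwise

private lemma relindex_conj_smul {G : Type*} [Group G] (g : G) (A B : Subgroup G) :
    (MulAut.conj g • A).relIndex (MulAut.conj g • B) = A.relIndex B := by
  have h1 : MulAut.conj g • A = A.map (MulAut.conj g).toMonoidHom := rfl
  have h2 : MulAut.conj g • B = B.map (MulAut.conj g).toMonoidHom := rfl
  rw [h1, h2, ← Subgroup.relIndex_comap,
    Subgroup.comap_map_eq_self_of_injective (MulAut.conj g).injective]

/-- Corollary 6.10 of the paper, abstractly.  Let `H ⊆ G` be a subgroup and `G₀ ⊴ G`
a normal subgroup such that `H₀ := H ⊓ G₀` has finite index in both `G₀` and `H`.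
If every injective homomorphism `H → H` is the restriction of conjugation by some
element of `G`, then `H` is co-Hopfian: every injective endomorphism of `H` is
surjective. -/
theorem coHopfian_of_conjugation {G : Type*} [Group G]
    (H G₀ : Subgroup G) (hnorm : G₀.Normal)
    (hidx₀ : (H ⊓ G₀).relIndex G₀ ≠ 0)
    (hidxH : (H ⊓ G₀).relIndex H ≠ 0)
    (hconj : ∀ f : ↥H →* ↥H, Function.Injective f →
      ∃ g : G, ∀ x : ↥H, ((f x : G)) = g * (x : G) * g⁻¹) :
    ∀ f : ↥H →* ↥H, Function.Injective f → Function.Surjective f := by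
  intro f hf
  obtain ⟨g, hg⟩ := hconj f hf
  have hCH : MulAut.conj g • H ≤ H := by
    rintro - ⟨x, hx, rfl⟩
    have : (f ⟨x, hx⟩ : G) ∈ H := SetLike.coe_mem _
    simpa [hg ⟨x, hx⟩] using this
  haveI := hnorm
  have hG0 : MulAut.conj g • G₀ = G₀ := Subgroup.Normal.conj_smul_eq_self g G₀
  have hsmul0 : MulAut.conj g • (H ⊓ G₀) ≤ H ⊓ G₀ := by
    rw [Subgroup.smul_inf, hG0]
    exact inf_le_inf_right _ hCH
  have hrel0 : (MulAut.conj g • (H ⊓ G₀)).relIndex G₀ = (H ⊓ G₀).relIndex G₀ :=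
    calc (MulAut.conj g • (H ⊓ G₀)).relIndex G₀
        = (MulAut.conj g • (H ⊓ G₀)).relIndex (MulAut.conj g • G₀) := by rw [hG0]
      _ = (H ⊓ G₀).relIndex G₀ := relindex_conj_smul g _ _
  have hmul : (MulAut.conj g • (H ⊓ G₀)).relIndex (H ⊓ G₀) * (H ⊓ G₀).relIndex G₀
      = (MulAut.conj g • (H ⊓ G₀)).relIndex G₀ :=
    Subgroup.relIndex_mul_relIndex _ _ _ hsmul0 inf_le_right
  have h1 : (MulAut.conj g • (H ⊓ G₀)).relIndex (H ⊓ G₀) = 1 := by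
    rw [hrel0] at hmul
    exact Nat.eq_of_mul_eq_mul_right (Nat.pos_of_ne_zero hidx₀) (by rw [hmul, one_mul])
  have heq0 : MulAut.conj g • (H ⊓ G₀) = H ⊓ G₀ :=
    le_antisymm hsmul0 (Subgroup.relIndex_eq_one.mp h1)
  have hH0CH : H ⊓ G₀ ≤ MulAut.conj g • H := by
    rw [← heq0, Subgroup.smul_inf]
    exact inf_le_left
  have hrel1 : (H ⊓ G₀).relIndex (MulAut.conj g • H) = (H ⊓ G₀).relIndex H :=
    calc (H ⊓ G₀).relIndex (MulAut.conj g • H)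
        = (MulAut.conj g • (H ⊓ G₀)).relIndex (MulAut.conj g • H) := by rw [heq0]
      _ = (H ⊓ G₀).relIndex H := relindex_conj_smul g _ _
  have hmul2 : (H ⊓ G₀).relIndex (MulAut.conj g • H) * (MulAut.conj g • H).relIndex H
      = (H ⊓ G₀).relIndex H :=
    Subgroup.relIndex_mul_relIndex _ _ _ hH0CH hCH
  have h2 : (MulAut.conj g • H).relIndex H = 1 := by
    rw [hrel1] at hmul2
    exact Nat.eq_of_mul_eq_mul_left (Nat.pos_of_ne_zero hidxH) (by rw [hmul2, mul_one])
  have hHle : H ≤ MulAut.conj g • H := Subgroup.relIndex_eq_one.mp h2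
  intro y
  obtain ⟨s, hs, hsy⟩ := hHle y.2
  refine ⟨⟨s, hs⟩, Subtype.ext ?_⟩
  rw [hg ⟨s, hs⟩]
  simpa using hsy
end

section
/- The product rank of a nonabelian free group equals 1, and the product rank of a direct product of k nonabelian free groups equals k. In particular, for k ≠ l, a direct product of k nonabelian free groups is not isomorphic to a direct product of l nonabelian free groups. -/
namespace FGAux
open FreeGroup

variable {β : Type*} [DecidableEq β]

lemma invRev_cons (x : β × Bool) (M : List (β × Bool)) :
    invRev (x :: M) = invRev M ++ [(x.1, !x.2)] := by
  simp [invRev]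

lemma head?_invRev (L : List (β × Bool)) :
    (invRev L).head? = L.getLast?.map (fun p => (p.1, !p.2)) := by
  rw [invRev, List.head?_reverse, List.getLast?_map]

lemma mul_letter_left (z : FreeGroup β) (g : β × Bool)
    (h : ∀ p ∈ z.toWord.head?, ¬(g.1 = p.1 ∧ g.2 = !p.2)) :
    (FreeGroup.mk [g] * z).toWord = g :: z.toWord := by
  conv_lhs => rw [← FreeGroup.mk_toWord (x := z)]
  rw [FreeGroup.mul_mk, FreeGroup.toWord_mk]
  have hred : reduce z.toWord = z.toWord := z.reduce_toWord
  rw [show ([g] ++ z.toWord) = g :: z.toWord from rfl, reduce.cons, hred]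
  cases hL : z.toWord with
  | nil => simp
  | cons hd tl =>
    have := h hd (by rw [hL]; rfl)
    simp [this]

lemma mul_letter_right (z : FreeGroup β) (g : β × Bool)
    (h : ∀ p ∈ z.toWord.getLast?, ¬(g.1 = p.1 ∧ (!g.2) = p.2)) :
    (z * FreeGroup.mk [g]).toWord = z.toWord ++ [g] := by
  have hinv : (z * FreeGroup.mk [g])⁻¹ = FreeGroup.mk [(g.1, !g.2)] * z⁻¹ := by
    rw [mul_inv_rev, FreeGroup.inv_mk]
    simp [invRev]
  have hleft : ((z * FreeGroup.mk [g])⁻¹).toWord = (g.1, !g.2) :: z⁻¹.toWord := by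
    rw [hinv]
    apply mul_letter_left
    intro p hp
    rw [FreeGroup.toWord_inv, head?_invRev, Option.mem_map] at hp
    obtain ⟨q, hq, rfl⟩ := hp
    have := h q hq
    intro hc
    simp only at hc
    exact this ⟨hc.1, by rw [hc.2]; simp⟩
  have := congrArg invRev hleft
  rw [← FreeGroup.toWord_inv, inv_inv] at this
  rw [this, invRev_cons, FreeGroup.toWord_inv, invRev_invRev]
  simp

lemma cons_eq_append_singleton {g : β × Bool} {L : List (β × Bool)} (h : g :: L = L ++ [g]) :
    L = List.replicate L.length g := by
  induction L with
  | nil => rfl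
  | cons hd tl ih =>
    simp only [List.cons_append] at h
    obtain ⟨rfl, h2⟩ := List.cons.injEq .. ▸ h
    · simp only [List.length_cons, List.replicate_succ]
      rw [← ih h2]

omit [DecidableEq β] in
lemma comm_of_subsingleton [Subsingleton β] (u v : FreeGroup β) : Commute u v := by
  induction u using FreeGroup.induction_on with
  | C1 => exact Commute.one_left v
  | of x =>
      induction v using FreeGroup.induction_on with
      | C1 => exact Commute.one_right _
      | of y => rw [Subsingleton.elim x y]
      | inv_of y hy => exact hy.inv_right
      | mul y₁ y₂ h1 h2 => exact h1.mul_right h2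
  | inv_of x hx => exact hx.inv_left
  | mul x₁ x₂ h1 h2 => exact h1.mul_left h2

lemma all_commute_of_center (z : FreeGroup β) (hz : ∀ g, Commute z g) (h1 : z ≠ 1)
    (u v : FreeGroup β) : Commute u v := by
  by_cases hsub : ∀ a b : β, a = b
  · haveI : Subsingleton β := ⟨hsub⟩
    exact comm_of_subsingleton u v
  exfalso
  push_neg at hsub
  obtain ⟨a, b, hab⟩ := hsub
  set L := z.toWord with hLdef
  have hL : L ≠ [] := by simpa [hLdef] using h1
  obtain ⟨h0, hh0⟩ : ∃ h0, L.head? = some h0 := ⟨L.head hL, List.head?_eq_head hL⟩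
  obtain ⟨l0, hl0⟩ : ∃ l0, L.getLast? = some l0 := ⟨L.getLast hL, List.getLast?_eq_getLast hL⟩
  have key : ∀ g : β × Bool, g ≠ (h0.1, !h0.2) → g ≠ (l0.1, !l0.2) →
      L = List.replicate L.length g := by
    intro g hg1 hg2
    have hcl : (FreeGroup.mk [g] * z).toWord = g :: L := by
      apply mul_letter_left
      intro p hp
      rw [hh0, Option.mem_some_iff] at hp
      subst hp
      intro ⟨e1, e2⟩
      exact hg1 (Prod.ext e1 e2)
    have hcr : (z * FreeGroup.mk [g]).toWord = L ++ [g] := by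
      apply mul_letter_right
      intro p hp
      rw [hl0, Option.mem_some_iff] at hp
      subst hp
      intro ⟨e1, e2⟩
      exact hg2 (Prod.ext e1 (by rw [← e2]; simp))
    have := (hz (FreeGroup.mk [g])).symm
    have heq : g :: L = L ++ [g] := by
      rw [← hcl, ← hcr, this]
    exact cons_eq_append_singleton heq
  have hex : ∃ g : β × Bool, (g.1 = a ∨ g.1 = b) ∧ g ≠ (h0.1, !h0.2) ∧ g ≠ (l0.1, !l0.2) := by
    by_contra hno
    push_neg at hno
    have p1 : (h0.1, !h0.2) = (a, true) ∨ (h0.1, !h0.2) = (a, false) := by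
      by_cases e1 : (a, true) = (h0.1, !h0.2)
      · exact Or.inl e1.symm
      by_cases e2 : (a, false) = (h0.1, !h0.2)
      · exact Or.inr e2.symm
      · have q1 := hno (a, true) (Or.inl rfl) e1
        have q2 := hno (a, false) (Or.inl rfl) e2
        rw [← q1] at q2
        simp at q2
    have p2 : (h0.1, !h0.2) = (b, true) ∨ (h0.1, !h0.2) = (b, false) := by
      by_cases e1 : (b, true) = (h0.1, !h0.2)
      · exact Or.inl e1.symm
      by_cases e2 : (b, false) = (h0.1, !h0.2)
      · exact Or.inr e2.symm
      · have q1 := hno (b, true) (Or.inr rfl) e1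
        have q2 := hno (b, false) (Or.inr rfl) e2
        rw [← q1] at q2
        simp at q2
    rcases p1 with h|h <;> rcases p2 with h'|h' <;> rw [h] at h' <;>
      exact hab (Prod.ext_iff.mp h').1
  obtain ⟨g, hbase, hg1, hg2⟩ := hex
  have hrep := key g hg1 hg2
  -- second letter with a different base
  set c := if g.1 = a then b else a with hc
  have hcg : c ≠ g.1 := by
    rw [hc]
    rcases hbase with h|h <;> rw [h]
    · simpa using Ne.symm hab
    · rw [if_neg (Ne.symm hab)]; exact hab
  -- h0 and l0 both equal g
  have hn : L.length ≠ 0 := by simpa using hL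
  have hh0g : h0 = g := by
    rw [hrep] at hh0
    rw [List.head?_replicate] at hh0
    simp [hn] at hh0
    exact hh0.symm
  have hl0g : l0 = g := by
    rw [hrep] at hl0
    rw [List.getLast?_replicate] at hl0
    simp [hn] at hl0
    exact hl0.symm
  have hrep' := key (c, true) (by rw [hh0g]; intro h; exact hcg (Prod.ext_iff.mp h).1)
    (by rw [hl0g]; intro h; exact hcg (Prod.ext_iff.mp h).1)
  rw [hrep'] at hrep
  have : (c, true) = g := by
    have := congrArg List.head? hrep
    rw [List.head?_replicate, List.head?_replicate] at this
    simpa [hn] using this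
  exact hcg (by rw [← this])

omit [DecidableEq β] in
lemma commute_trans {x y z : FreeGroup β} (hx : x ≠ 1) (hxy : Commute x y)
    (hxz : Commute x z) : Commute y z := by
  classical
  set C := Subgroup.centralizer ({x} : Set (FreeGroup β)) with hC
  have hxC : x ∈ C := Subgroup.mem_centralizer_singleton_iff.mpr rfl
  have hyC : y ∈ C := Subgroup.mem_centralizer_singleton_iff.mpr hxy.symm
  have hzC : z ∈ C := Subgroup.mem_centralizer_singleton_iff.mpr hxz.symm
  let e := IsFreeGroup.toFreeGroup C
  have hcen : ∀ g, Commute (e ⟨x, hxC⟩) g := by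
    intro g
    have h2 : (⟨x, hxC⟩ : C) * e.symm g = e.symm g * ⟨x, hxC⟩ := by
      have := Subgroup.mem_centralizer_singleton_iff.mp (e.symm g).2
      exact Subtype.ext (by push_cast; exact this.symm)
    have := congrArg e h2
    simpa [Commute, SemiconjBy] using this
  have hne : e ⟨x, hxC⟩ ≠ 1 := by
    simp only [ne_eq, MulEquiv.map_eq_one_iff]
    intro h
    exact hx (by simpa [Subtype.ext_iff] using h)
  have hall := all_commute_of_center _ hcen hne (e ⟨y, hyC⟩) (e ⟨z, hzC⟩)
  have h3 : (⟨y, hyC⟩ : C) * ⟨z, hzC⟩ = ⟨z, hzC⟩ * ⟨y, hyC⟩ := by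
    apply e.injective
    rw [_root_.map_mul, _root_.map_mul]; exact hall
  have := congrArg Subtype.val h3
  push_cast at this
  exact this

omit [DecidableEq β] in
lemma not_commute_of (hab : a ≠ b) : ¬ Commute (FreeGroup.of a) (FreeGroup.of b) := by
  classical
  intro h
  have := congrArg FreeGroup.toWord h
  have h1 : FreeGroup.of a * FreeGroup.of b = FreeGroup.mk [(a, true), (b, true)] := by
    rw [FreeGroup.of, FreeGroup.of, FreeGroup.mul_mk]; rfl
  have h2 : FreeGroup.of b * FreeGroup.of a = FreeGroup.mk [(b, true), (a, true)] := by
    rw [FreeGroup.of, FreeGroup.of, FreeGroup.mul_mk]; rfl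
  rw [h1, h2, FreeGroup.toWord_mk, FreeGroup.toWord_mk] at this
  simp [FreeGroup.reduce] at this
  exact hab this.1

end FGAux
namespace FGAux

universe u v

lemma UB {m k : ℕ} {S : Fin m → Type u} {T : Fin k → Type v} (hS : ∀ i, Nontrivial (S i))
    (φ : ((i : Fin m) → FreeGroup (S i)) →* ((j : Fin k) → FreeGroup (T j)))
    (hφ : Function.Injective φ) : m ≤ k := by
  classical
  have hpair : ∀ i, ∃ s t : S i, s ≠ t := fun i => @exists_pair_ne (S i) (hS i)
  choose s t hst using hpair
  set A : Fin m → ((i : Fin m) → FreeGroup (S i)) :=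
    fun i => Pi.mulSingle i (FreeGroup.of (s i)) with hA
  set B : Fin m → ((i : Fin m) → FreeGroup (S i)) :=
    fun i => Pi.mulSingle i (FreeGroup.of (t i)) with hB
  have hnc : ∀ i, ∃ jj, ¬ Commute (φ (A i) jj) (φ (B i) jj) := by
    intro i
    by_contra hno
    push_neg at hno
    have hcomm : φ (A i) * φ (B i) = φ (B i) * φ (A i) := by
      funext jj; exact hno jj
    rw [← _root_.map_mul, ← _root_.map_mul] at hcomm
    have h2 := congrFun (hφ hcomm) i
    have h3 : FreeGroup.of (s i) * FreeGroup.of (t i)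
        = FreeGroup.of (t i) * FreeGroup.of (s i) := by
      simpa [hA, hB, Pi.mul_apply] using h2
    exact not_commute_of (hst i) h3
  choose j hj using hnc
  have hinj : Function.Injective j := by
    intro i i' hii
    by_contra hne
    have cAA : Commute (A i') (A i) := Pi.mulSingle_commute (Ne.symm hne) _ _
    have cAB : Commute (A i') (B i) := Pi.mulSingle_commute (Ne.symm hne) _ _
    have cBA : Commute (B i') (A i) := Pi.mulSingle_commute (Ne.symm hne) _ _
    have cBB : Commute (B i') (B i) := Pi.mulSingle_commute (Ne.symm hne) _ _
    have e1 : φ (A i') (j i) = 1 := by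
      by_contra hone
      exact hj i (commute_trans hone (congrFun (cAA.map φ) (j i))
        (congrFun (cAB.map φ) (j i)))
    have e2 : φ (B i') (j i) = 1 := by
      by_contra hone
      exact hj i (commute_trans hone (congrFun (cBA.map φ) (j i))
        (congrFun (cBB.map φ) (j i)))
    apply hj i'
    rw [← hii, e1, e2]
  simpa using Fintype.card_le_of_injective j hinj

lemma LB {k : ℕ} (S : Fin k → Type u) (hS : ∀ i, Nontrivial (S i)) :
    HasFreeProd ((i : Fin k) → FreeGroup (S i)) k := by
  have hpair : ∀ i, ∃ f : Bool → S i, Function.Injective f := by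
    intro i
    obtain ⟨a, b, hab⟩ := @exists_pair_ne (S i) (hS i)
    exact ⟨fun c => if c then a else b, by intro x y hxy; cases x <;> cases y <;> simp_all⟩
  choose f hf using hpair
  have hinj : ∀ i, Function.Injective (FreeGroup.map (f i)) := by
    intro i
    obtain ⟨g, hg⟩ := (hf i).hasLeftInverse
    intro x y hxy
    have h2 := congrArg (FreeGroup.map g) hxy
    rw [FreeGroup.map.comp, FreeGroup.map.comp] at h2
    have hgf : (g ∘ f i) = id := funext fun c => hg c
    rwa [hgf, FreeGroup.map.id, FreeGroup.map.id] at h2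
  refine ⟨fun _ => Bool, fun _ => inferInstance,
    { toFun := fun x i => FreeGroup.map (f i) (x i),
      map_one' := by funext i; simp,
      map_mul' := by intro x y; funext i; simp }, ?_⟩
  intro x y hxy
  funext i
  exact hinj i (congrFun hxy i)

lemma hasFreeProd_freeGroup (α : Type u) [Nontrivial α] : HasFreeProd (FreeGroup α) 1 := by
  obtain ⟨a, b, hab⟩ := exists_pair_ne α
  have hfinj : Function.Injective (fun c : Bool => if c then a else b) := by
    intro x y hxy; cases x <;> cases y <;> simp_all
  have hinj : Function.Injective (FreeGroup.map (fun c : Bool => if c then a else b)) := by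
    obtain ⟨g, hg⟩ := hfinj.hasLeftInverse
    intro x y hxy
    have h2 := congrArg (FreeGroup.map g) hxy
    rw [FreeGroup.map.comp, FreeGroup.map.comp] at h2
    have hgf : (g ∘ fun c : Bool => if c then a else b) = id := funext fun c => hg c
    rwa [hgf, FreeGroup.map.id, FreeGroup.map.id] at h2
  refine ⟨fun _ => Bool, fun _ => inferInstance,
    (FreeGroup.map (fun c : Bool => if c then a else b)).comp
      (Pi.evalMonoidHom (fun _ : Fin 1 => FreeGroup Bool) 0), ?_⟩
  intro x y hxy
  have := hinj hxy
  funext i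
  have hi : i = 0 := Subsingleton.elim i 0
  rw [hi]
  exact this

lemma prodRank_eq {H : Type*} [Group H] {k : ℕ} (h1 : HasFreeProd H k)
    (h2 : ∀ m : ℕ, HasFreeProd H m → m ≤ k) : prodRank H = k := by
  apply le_antisymm
  · apply sSup_le
    rintro n ⟨m, rfl, hm⟩
    exact_mod_cast h2 m hm
  · exact le_sSup ⟨k, rfl, h1⟩

end FGAux

/-- The product rank of a nonabelian free group is `1`, the product rank of a direct
product of `k` nonabelian free groups is `k`, and in particular products of `k` and
`l` nonabelian free groups with `k ≠ l` are not isomorphic. -/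
theorem prodRank_free_and_products {α : Type*} [Nontrivial α]
    {k l : ℕ} (S : Fin k → Type*) (T : Fin l → Type*)
    (hS : ∀ i, Nontrivial (S i)) (hT : ∀ j, Nontrivial (T j)) (hkl : k ≠ l) :
    prodRank (FreeGroup α) = 1 ∧
    prodRank ((i : Fin k) → FreeGroup (S i)) = (k : ℕ∞) ∧
    ¬ Nonempty (((i : Fin k) → FreeGroup (S i)) ≃* ((j : Fin l) → FreeGroup (T j))) := by
  refine ⟨?_, ?_, ?_⟩
  · have h1 : prodRank (FreeGroup α) = (1 : ℕ) :=
      FGAux.prodRank_eq (FGAux.hasFreeProd_freeGroup α) (by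
        rintro m ⟨S', hS', φ, hφ⟩
        let ψ : FreeGroup α →* ((_ : Fin 1) → FreeGroup α) :=
          { toFun := fun g _ => g, map_one' := rfl, map_mul' := fun _ _ => rfl }
        have hψ : Function.Injective ψ := fun x y h => congrFun h 0
        exact FGAux.UB hS' (ψ.comp φ) (hψ.comp hφ))
    simpa using h1
  · exact FGAux.prodRank_eq (FGAux.LB S hS) (by
      rintro m ⟨S', hS', φ, hφ⟩
      exact FGAux.UB hS' φ hφ)
  · rintro ⟨e⟩
    obtain ⟨S', hS', φ, hφ⟩ := FGAux.LB S hS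
    obtain ⟨T', hT', ψ, hψ⟩ := FGAux.LB T hT
    have h1 : k ≤ l := FGAux.UB hS' (e.toMonoidHom.comp φ) (e.injective.comp hφ)
    have h2 : l ≤ k := FGAux.UB hT' (e.symm.toMonoidHom.comp ψ) (e.symm.injective.comp hψ)
    exact hkl (le_antisymm h1 h2)
end
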